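/- arXiv:1503.04038 — 7 statements merged into one kernel-verified Lean document; each statement's English description precedes it below -/
import Mathlib

section
/- Let f ∈ L¹(ℝ, ℂ) satisfy ∫_ℝ e^{iyt} f(t) dt = 0 for every real y ≥ 0. Then for every a ≥ 0 and every b ≤ 0 one has ∫_ℝ e^{i(at + b/t)} f(t) dt = 0. -/
/-! For `ε > 0` the function `(t + iε)⁻¹ = -i ∫₀^∞ e^{-εu} e^{iut} du` is a superposition of
nonnegative frequencies with integrable weight, so by Fubini multiplying by it preserves the
vanishing of all nonnegative Fourier frequencies of `f`; so does multiplying by `e^{iat}`, `a ≥ 0`.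
Expanding `exp (ib (t + iε)⁻¹)` in its uniformly convergent power series gives
`∫ e^{i(at + b/(t + iε))} f(t) dt = 0`. For `b ≤ 0` these integrands are dominated by `|f|`, and
dominated convergence as `ε → 0⁺` gives the claim. -/

open MeasureTheory Real

open Set Complex Filter Topology

theorem norm_exp_I_mul_ofReal_mul_ofReal (a t : ℝ) : ‖cexp (I * a * t)‖ = 1 := by
  rw [mul_assoc, ← ofReal_mul, norm_exp_I_mul_ofReal]

theorem ofReal_add_I_mul_ne_zero {ε : ℝ} (hε : ε ≠ 0) (t : ℝ) : (t : ℂ) + I * ε ≠ 0 := by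
  intro h
  simpa [hε] using congrArg Complex.im h

theorem norm_inv_ofReal_add_I_mul_le {ε : ℝ} (hε : 0 < ε) (t : ℝ) :
    ‖((t : ℂ) + I * ε)⁻¹‖ ≤ ε⁻¹ := by
  rw [norm_inv]
  refine inv_anti₀ hε ((le_of_eq ?_).trans (abs_im_le_norm _))
  simp [abs_of_pos hε]

theorem integral_exp_I_mul_ofReal_add_I_mul {ε : ℝ} (hε : 0 < ε) (t : ℝ) :
    ∫ u in Ioi (0 : ℝ), cexp (I * (t + I * ε) * u) = I * ((t : ℂ) + I * ε)⁻¹ := by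
  have hre : (I * ((t : ℂ) + I * ε)).re < 0 := by simpa using hε
  rw [integral_exp_mul_complex_Ioi hre]
  field_simp [ofReal_add_I_mul_ne_zero hε.ne' t]
  simp

theorem integrable_inv_ofReal_add_I_mul_mul {f : ℝ → ℂ} (hf : Integrable f) {ε : ℝ}
    (hε : 0 < ε) : Integrable fun t : ℝ => ((t : ℂ) + I * ε)⁻¹ * f t :=
  hf.bdd_mul (Continuous.inv₀ (by fun_prop) (ofReal_add_I_mul_ne_zero hε.ne')).aestronglyMeasurable
    (.of_forall (norm_inv_ofReal_add_I_mul_le hε))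

theorem norm_exp_I_mul_inv_le_one {b : ℝ} (hb : b ≤ 0) {z : ℂ} (hz : 0 ≤ z.im) :
    ‖cexp (I * b * z⁻¹)‖ ≤ 1 := by
  rw [Complex.norm_exp, Real.exp_le_one_iff]
  simp only [mul_re, mul_im, I_re, I_im, ofReal_re, ofReal_im, inv_re, inv_im]
  rw [neg_div]
  nlinarith [div_nonneg hz (normSq_nonneg z)]

theorem tendsto_integral_exp_I_mul_inv_ofReal_add_I_mul {g : ℝ → ℂ} (hg : Integrable g) {b : ℝ}
    (hb : b ≤ 0) :
    Tendsto (fun ε : ℝ => ∫ t : ℝ, cexp (I * b * ((t : ℂ) + I * ε)⁻¹) * g t)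
      (𝓝[>] 0) (𝓝 (∫ t : ℝ, cexp (I * b * (t : ℂ)⁻¹) * g t)) := by
  refine tendsto_integral_filter_of_dominated_convergence (fun t => ‖g t‖)
    (.of_forall fun ε => by have := hg.1; fun_prop) ?_ hg.norm ?_
  · filter_upwards [self_mem_nhdsWithin] with ε (hε : 0 < ε)
    refine .of_forall fun t => ?_
    rw [norm_mul]
    exact mul_le_of_le_one_left (norm_nonneg _)
      (norm_exp_I_mul_inv_le_one hb (by simpa using hε.le))
  · filter_upwards [Measure.ae_ne volume 0] with t ht
    have : ContinuousAt (fun ε : ℝ => cexp (I * b * ((t : ℂ) + I * ε)⁻¹) * g t) 0 := by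
      fun_prop (disch := simpa)
    simpa using this.tendsto.mono_left nhdsWithin_le_nhds

theorem integral_cexp_mul_eq_zero_of_integral_pow_mul_eq_zero {α : Type*} [MeasurableSpace α]
    {μ : Measure α} {w g : α → ℂ} (hg : Integrable g μ) (hw : AEStronglyMeasurable w μ) {C : ℝ}
    (hwC : ∀ᵐ x ∂μ, ‖w x‖ ≤ C) (h : ∀ n : ℕ, ∫ x, w x ^ n * g x ∂μ = 0) :
    ∫ x, cexp (w x) * g x ∂μ = 0 := by
  have hsum : HasSum (fun n : ℕ => ∫ x, w x ^ n / n.factorial * g x ∂μ)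
      (∫ x, cexp (w x) * g x ∂μ) :=
    hasSum_integral_of_dominated_convergence (fun n x => C ^ n / n.factorial * ‖g x‖)
      (fun n => by have := hg.1; fun_prop) (fun n => ?_)
      (.of_forall fun x => (Real.summable_pow_div_factorial C).mul_right _) ?_
      (.of_forall fun x => ?_)
  · have hterm (n : ℕ) : ∫ x, w x ^ n / n.factorial * g x ∂μ = 0 := by
      simp_rw [div_eq_inv_mul, mul_assoc, integral_const_mul, h, mul_zero]
    rw [funext hterm] at hsum
    exact hsum.unique hasSum_zero
  · filter_upwards [hwC] with x hx
    rw [norm_mul, norm_div, norm_pow, Complex.norm_natCast]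
    gcongr
  · simp_rw [tsum_mul_right]
    exact hg.norm.const_mul _
  · rw [Complex.exp_eq_exp_ℂ]
    exact (NormedSpace.expSeries_div_hasSum_exp (w x)).mul_right (g x)

/-- The Hardy space `H¹₊(ℝ)`, described on the Fourier side. -/
def MemHardyPlus (f : ℝ → ℂ) : Prop :=
  Integrable f ∧ ∀ y : ℝ, 0 ≤ y → ∫ t : ℝ, cexp (I * y * t) * f t = 0

namespace MemHardyPlus

variable {f : ℝ → ℂ}

theorem integral_eq_zero (hf : MemHardyPlus f) : ∫ t, f t = 0 := by
  simpa using hf.2 0 le_rfl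

theorem exp_I_mul_mul (hf : MemHardyPlus f) {a : ℝ} (ha : 0 ≤ a) :
    MemHardyPlus fun t => cexp (I * a * t) * f t := by
  refine ⟨hf.1.bdd_mul (c := 1) (by fun_prop)
    (.of_forall fun t => (norm_exp_I_mul_ofReal_mul_ofReal a t).le), fun y hy => ?_⟩
  have hfreq (t : ℝ) :
      cexp (I * y * t) * (cexp (I * a * t) * f t) = cexp (I * ↑(y + a) * t) * f t := by
    rw [← mul_assoc, ← Complex.exp_add]
    congr 2
    push_cast
    ring
  simp_rw [hfreq]
  exact hf.2 _ (add_nonneg hy ha)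

theorem inv_ofReal_add_I_mul_mul (hf : MemHardyPlus f) {ε : ℝ} (hε : 0 < ε) :
    MemHardyPlus fun t : ℝ => ((t : ℂ) + I * ε)⁻¹ * f t := by
  refine ⟨integrable_inv_ofReal_add_I_mul_mul hf.1 hε, fun y hy => ?_⟩
  set G : ℝ → ℝ → ℂ := fun t u => cexp (I * (t + I * ε) * u) * (cexp (I * y * t) * f t)
  have hG_split (t u : ℝ) :
      G t u = ↑(Real.exp (-(ε * u))) * (cexp (I * ↑(y + u) * t) * f t) := by
    simp only [G, ← mul_assoc, ofReal_exp, ← Complex.exp_add]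
    congr 2
    push_cast
    linear_combination (ε * u : ℂ) * I_sq
  have hG_int : Integrable (Function.uncurry G) (volume.prod (volume.restrict (Ioi 0))) := by
    refine (hf.1.norm.mul_prod (integrableOn_exp_mul_Ioi (neg_lt_zero.2 hε) 0)).mono' ?_
      (.of_forall fun p => le_of_eq ?_)
    · exact (Continuous.aestronglyMeasurable (by fun_prop)).mul
        ((Continuous.aestronglyMeasurable (by fun_prop)).mul hf.1.1.comp_fst)
    · rw [Function.uncurry_apply_pair, hG_split, norm_mul, norm_mul,
        norm_exp_I_mul_ofReal_mul_ofReal, norm_real, norm_of_nonneg (exp_pos _).le, one_mul,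
        mul_comm, neg_mul]
  calc ∫ t : ℝ, cexp (I * y * t) * (((t : ℂ) + I * ε)⁻¹ * f t)
      = -I * ∫ t, ∫ u in Ioi 0, G t u := by
        rw [← integral_const_mul]
        congr 1 with t
        rw [integral_mul_const, integral_exp_I_mul_ofReal_add_I_mul hε]
        linear_combination (cexp (I * y * t) * ((t : ℂ) + I * ε)⁻¹ * f t) * I_sq
    _ = -I * ∫ u in Ioi 0, ∫ t, G t u := by rw [integral_integral_swap hG_int]
    _ = 0 := by
        rw [setIntegral_eq_zero_of_forall_eq_zero ?_, mul_zero]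
        intro u (hu : 0 < u)
        simp_rw [hG_split, integral_const_mul, hf.2 _ (add_nonneg hy hu.le), mul_zero]

theorem inv_ofReal_add_I_mul_pow_mul (hf : MemHardyPlus f) {ε : ℝ} (hε : 0 < ε)
    (n : ℕ) : MemHardyPlus fun t : ℝ => ((t : ℂ) + I * ε)⁻¹ ^ n * f t := by
  induction n with
  | zero => simpa using hf
  | succ n ih => simpa only [pow_succ', mul_assoc] using ih.inv_ofReal_add_I_mul_mul hε

theorem integral_exp_mul_inv_ofReal_add_I_mul_eq_zero (hf : MemHardyPlus f)
    {ε : ℝ} (hε : 0 < ε) (c : ℂ) : ∫ t : ℝ, cexp (c * ((t : ℂ) + I * ε)⁻¹) * f t = 0 := by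
  refine integral_cexp_mul_eq_zero_of_integral_pow_mul_eq_zero hf.1 (by fun_prop)
    (C := ‖c‖ * ε⁻¹) (.of_forall fun t => ?_) fun n => ?_
  · rw [norm_mul]
    exact mul_le_mul_of_nonneg_left (norm_inv_ofReal_add_I_mul_le hε t) (norm_nonneg c)
  · simp_rw [mul_pow, mul_assoc, integral_const_mul,
      (hf.inv_ofReal_add_I_mul_pow_mul hε n).integral_eq_zero, mul_zero]

end MemHardyPlus

/-- If `f ∈ H¹₊(ℝ)` (all nonnegative Fourier frequencies of `f` vanish), then
the integrals against `e^{i(at + b/t)}` vanish for all `a ≥ 0`, `b ≤ 0`. -/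
theorem stmt_5 (f : ℝ → ℂ) (hf : Integrable f)
    (h : ∀ y : ℝ, 0 ≤ y → ∫ t : ℝ, Complex.exp (Complex.I * y * t) * f t = 0)
    (a b : ℝ) (ha : 0 ≤ a) (hb : b ≤ 0) :
    ∫ t : ℝ, Complex.exp (Complex.I * (a * t + b / t)) * f t = 0 := by
  have hg : MemHardyPlus fun t => cexp (I * a * t) * f t := MemHardyPlus.exp_I_mul_mul ⟨hf, h⟩ ha
  have hzero : ∀ᶠ ε : ℝ in 𝓝[>] 0,
      ∫ t : ℝ, cexp (I * b * ((t : ℂ) + I * ε)⁻¹) * (cexp (I * a * t) * f t) = 0 :=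
    eventually_mem_nhdsWithin.mono fun ε hε =>
      hg.integral_exp_mul_inv_ofReal_add_I_mul_eq_zero hε _
  calc ∫ t : ℝ, cexp (I * (a * t + b / t)) * f t
      = ∫ t : ℝ, cexp (I * b * (t : ℂ)⁻¹) * (cexp (I * a * t) * f t) := by
        congr 1 with t
        rw [← mul_assoc, ← Complex.exp_add]
        congr 2
        ring
    _ = 0 := tendsto_nhds_unique (tendsto_integral_exp_I_mul_inv_ofReal_add_I_mul hg.1 hb)
        (tendsto_const_nhds.congr' (hzero.mono fun _ h => h.symm))
end

section
/- For every real number a ≠ 0, the limit lim_{R→∞} ∫₁^R (e^{iat}/t) dt exists in ℂ and is nonzero. -/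
/-!
Integrating by parts, `∫₁^R e^{iat}/t dt = [e^{iat}/(iat)]₁^R + (ia)⁻¹ ∫₁^R e^{iat}/t² dt`, and the
last integral converges absolutely, so the limit exists and equals `(ia)⁻¹ (J - e^{ia})` with
`J = ∫₁^∞ e^{iat}/t² dt`. Now `J` is the mean of the unimodular function `e^{iat}` for the
probability measure `dt/t²` on `(1, ∞)`; as this function has countable level sets it is not a.e.
constant, so strict convexity of the unit disc gives `‖J‖ < 1 = ‖e^{ia}‖`.
-/

open MeasureTheory Real Filter Set Topology

theorem norm_integral_lt_one_of_measure_preimage_singleton_eq_zero {α E : Type*}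
    [MeasurableSpace α] [NormedAddCommGroup E] [NormedSpace ℝ E] [CompleteSpace E]
    [StrictConvexSpace ℝ E]
    {μ : Measure α} [IsProbabilityMeasure μ] {f : α → E} (hf : ∀ᵐ x ∂μ, ‖f x‖ ≤ 1)
    (h_fiber : ∀ c, μ (f ⁻¹' {c}) = 0) : ‖∫ x, f x ∂μ‖ < 1 := by
  rcases ae_eq_const_or_norm_integral_lt_of_norm_le_const hf with h_const | h_lt
  · have := ae_neBot.2 (IsProbabilityMeasure.ne_zero μ)
    obtain ⟨x, hx_eq, hx_ne⟩ := (h_const.and (measure_eq_zero_iff_ae_notMem.1 (h_fiber _))).exists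
    exact absurd hx_eq hx_ne
  · simpa using h_lt

theorem integrableOn_Ioi_inv_sq : IntegrableOn (fun t : ℝ ↦ (t ^ 2)⁻¹) (Ioi 1) := by
  refine (integrableOn_Ioi_rpow_of_lt (by norm_num : (-2 : ℝ) < -1) one_pos).congr_fun
    (fun t ht ↦ ?_) measurableSet_Ioi
  simp [Real.rpow_neg (zero_le_one.trans (le_of_lt ht))]

theorem integral_Ioi_inv_sq : ∫ t in Ioi (1 : ℝ), (t ^ 2)⁻¹ = 1 := by
  rw [← setIntegral_congr_fun measurableSet_Ioi
    (fun t (ht : 1 < t) ↦ by simp [Real.rpow_neg (zero_le_one.trans ht.le)] :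
      EqOn (fun t : ℝ ↦ t ^ (-2 : ℝ)) (fun t ↦ (t ^ 2)⁻¹) (Ioi 1)),
    integral_Ioi_rpow_of_lt (by norm_num) one_pos]
  norm_num

noncomputable def inverseSqMeasure : Measure ℝ :=
  (volume.restrict (Ioi 1)).withDensity fun t ↦ ENNReal.ofReal (t ^ 2)⁻¹

instance : IsProbabilityMeasure inverseSqMeasure := by
  rw [isProbabilityMeasure_iff, inverseSqMeasure, withDensity_apply _ MeasurableSet.univ,
    Measure.restrict_univ, ← ofReal_integral_eq_lintegral_ofReal integrableOn_Ioi_inv_sq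
      (ae_of_all _ fun t ↦ by positivity), integral_Ioi_inv_sq, ENNReal.ofReal_one]

theorem integral_inverseSqMeasure {E : Type*} [NormedAddCommGroup E] [NormedSpace ℝ E]
    (g : ℝ → E) : ∫ t, g t ∂inverseSqMeasure = ∫ t in Ioi 1, (t ^ 2)⁻¹ • g t := by
  rw [inverseSqMeasure, integral_withDensity_eq_integral_toReal_smul (by fun_prop)
    (ae_of_all _ fun _ ↦ ENNReal.ofReal_lt_top)]
  simp_rw [ENNReal.toReal_ofReal (inv_nonneg.2 (sq_nonneg _))]

theorem norm_exp_I_mul_ofReal_mul (a t : ℝ) : ‖Complex.exp (Complex.I * a * t)‖ = 1 := by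
  rw [mul_assoc, ← Complex.ofReal_mul, Complex.norm_exp_I_mul_ofReal]

theorem countable_setOf_exp_I_mul_eq {a : ℝ} (ha : a ≠ 0) (u : ℂ) :
    {t : ℝ | Complex.exp (Complex.I * a * t) = u}.Countable := by
  rcases eq_empty_or_nonempty {t : ℝ | Complex.exp (Complex.I * a * t) = u} with h | ⟨t₀, ht₀⟩
  · simp [h]
  refine (countable_range fun n : ℤ ↦ t₀ + 2 * π * n / a).mono fun t ht ↦ ?_
  obtain ⟨n, hn⟩ := Complex.exp_eq_exp_iff_exists_int.1 (ht.trans ht₀.symm)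
  refine ⟨n, ?_⟩
  have h_im : a * t = a * t₀ + n * (2 * π) := by simpa using congrArg Complex.im hn
  field_simp
  linarith

theorem norm_integral_exp_I_mul_div_sq_lt_one {a : ℝ} (ha : a ≠ 0) :
    ‖∫ t in Ioi (1 : ℝ), Complex.exp (Complex.I * a * t) / (t : ℂ) ^ 2‖ < 1 := by
  have h := norm_integral_lt_one_of_measure_preimage_singleton_eq_zero (μ := inverseSqMeasure)
    (f := fun t : ℝ ↦ Complex.exp (Complex.I * a * t))
    (ae_of_all _ fun t ↦ (norm_exp_I_mul_ofReal_mul a t).le) fun u ↦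
      (withDensity_absolutelyContinuous _ _).trans Measure.restrict_le_self.absolutelyContinuous
        ((countable_setOf_exp_I_mul_eq ha u).measure_zero volume)
  rw [integral_inverseSqMeasure] at h
  simpa only [Complex.real_smul, Complex.ofReal_inv, Complex.ofReal_pow, inv_mul_eq_div] using h

theorem integral_exp_mul_div {c : ℂ} (hc : c ≠ 0) {x R : ℝ} (hx : 0 < x) (hR : 0 < R) :
    ∫ t in x..R, Complex.exp (c * t) / t =
      Complex.exp (c * R) / (c * R) - Complex.exp (c * x) / (c * x) +
        c⁻¹ * ∫ t in x..R, Complex.exp (c * t) / (t : ℂ) ^ 2 := by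
  have h_ne : ∀ t ∈ uIcc x R, (t : ℂ) ≠ 0 := fun t ht ↦
    Complex.ofReal_ne_zero.2 ((lt_min hx hR).trans_le ht.1).ne'
  have hu : ∀ t ∈ uIcc x R, HasDerivAt (fun s : ℝ ↦ (s : ℂ)⁻¹) (-((t : ℂ) ^ 2)⁻¹) t :=
    fun t ht ↦ (hasDerivAt_inv (h_ne t ht)).comp_ofReal
  have hv : ∀ t ∈ uIcc x R,
      HasDerivAt (fun s : ℝ ↦ Complex.exp (c * s) / c) (Complex.exp (c * t)) t := by
    intro t _
    have := (((hasDerivAt_id (t : ℂ)).const_mul c).cexp.comp_ofReal).div_const c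
    simpa [mul_div_assoc, div_self hc] using this
  have hu' : IntervalIntegrable (fun t : ℝ ↦ -((t : ℂ) ^ 2)⁻¹) volume x R :=
    (ContinuousOn.neg (ContinuousOn.inv₀ (by fun_prop)
      fun t ht ↦ pow_ne_zero 2 (h_ne t ht))).intervalIntegrable
  have hv' : IntervalIntegrable (fun t : ℝ ↦ Complex.exp (c * t)) volume x R :=
    (by fun_prop : Continuous fun t : ℝ ↦ Complex.exp (c * t)).intervalIntegrable _ _
  have h_parts := intervalIntegral.integral_mul_deriv_eq_deriv_mul hu hv hu' hv'
  have h_rem : (fun t : ℝ ↦ -((t : ℂ) ^ 2)⁻¹ * (Complex.exp (c * t) / c)) =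
      fun t : ℝ ↦ -(c⁻¹ * (Complex.exp (c * t) / (t : ℂ) ^ 2)) := by
    funext t; ring
  simp only [h_rem, intervalIntegral.integral_neg, intervalIntegral.integral_const_mul] at h_parts
  rw [show (fun t : ℝ ↦ Complex.exp (c * t) / t) = fun t : ℝ ↦ (t : ℂ)⁻¹ * Complex.exp (c * t) by
    funext t; ring, h_parts]
  field_simp
  ring

theorem integrableOn_Ioi_exp_I_mul_div_sq (a : ℝ) :
    IntegrableOn (fun t : ℝ ↦ Complex.exp (Complex.I * a * t) / (t : ℂ) ^ 2) (Ioi 1) := by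
  refine integrableOn_Ioi_inv_sq.mono' (by fun_prop : Measurable _).aestronglyMeasurable
    (ae_of_all _ fun t ↦ ?_)
  rw [norm_div, norm_exp_I_mul_ofReal_mul, norm_pow, Complex.norm_real, Real.norm_eq_abs, sq_abs,
    one_div]

theorem tendsto_exp_I_mul_div_atTop (a : ℝ) :
    Tendsto (fun R : ℝ ↦ Complex.exp (Complex.I * a * R) / (Complex.I * a * R)) atTop (𝓝 0) := by
  refine squeeze_zero_norm' (a := fun R ↦ ‖Complex.I * a‖⁻¹ * R⁻¹) ?_ ?_
  · filter_upwards [eventually_gt_atTop 0] with R hR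
    rw [norm_div, norm_exp_I_mul_ofReal_mul, norm_mul, Complex.norm_real,
      Real.norm_of_nonneg hR.le, one_div, mul_inv]
  · simpa using tendsto_inv_atTop_zero.const_mul ‖Complex.I * a‖⁻¹

/-- The Nielsen (sici) spiral never passes through the origin: for `a ≠ 0`,
the improper integral `∫₁^∞ e^{iat}/t dt` converges to a nonzero limit. -/
theorem stmt_10 (a : ℝ) (ha : a ≠ 0) :
    ∃ L : ℂ, L ≠ 0 ∧
      Tendsto (fun R : ℝ => ∫ t in (1:ℝ)..R, Complex.exp (Complex.I * a * t) / t)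
        atTop (nhds L) := by
  set c : ℂ := Complex.I * a
  have hc : c ≠ 0 := mul_ne_zero Complex.I_ne_zero (Complex.ofReal_ne_zero.2 ha)
  set J := ∫ t in Ioi (1 : ℝ), Complex.exp (c * t) / (t : ℂ) ^ 2
  refine ⟨c⁻¹ * (J - Complex.exp c), mul_ne_zero (inv_ne_zero hc) (sub_ne_zero.2 fun h ↦ ?_), ?_⟩
  · have h_lt : ‖J‖ < 1 := norm_integral_exp_I_mul_div_sq_lt_one ha
    rw [h, Complex.norm_exp_I_mul_ofReal] at h_lt
    exact h_lt.false
  have h_rem : Tendsto (fun R : ℝ ↦ ∫ t in (1 : ℝ)..R, Complex.exp (c * t) / (t : ℂ) ^ 2)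
      atTop (𝓝 J) :=
    intervalIntegral_tendsto_integral_Ioi 1 (integrableOn_Ioi_exp_I_mul_div_sq a) tendsto_id
  have h_lim := ((tendsto_exp_I_mul_div_atTop a).sub_const (Complex.exp c / c)).add
    (h_rem.const_mul c⁻¹)
  rw [show c⁻¹ * (J - Complex.exp c) = 0 - Complex.exp c / c + c⁻¹ * J by ring]
  refine h_lim.congr' ?_
  filter_upwards [eventually_gt_atTop 0] with R hR
  simpa using (integral_exp_mul_div hc one_pos hR).symm
end

section
/- Fix 0 < β ≤ 1, and set C₀ = π²/6 − 5/4 and C₁ = π²/6 − 1. Let f : (−1,1) → ℝ be nonnegative, even (f(−x) = f(x)), and nondecreasing on [0,1). Then for every x ∈ (−1,1): β·C₀·f(0) ≤ T_β f(x) − (β/(2−|x|)²)·f(β/(2−|x|)) ≤ β·C₁·f(β/2), where in particular the defining series for T_β f(x) converges. -/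
/-!
For `0 ≤ x < 1` and `j ≠ 0` the denominator `|2j + x|` lies in `[n, n + 1]`, where `n ≥ 1` is the
image of `j` under the standard bijection `ℤ ≃ ℕ` (`j ↦ 2j`, `-j ↦ 2j - 1`); `n = 1` is exactly
the special index `j = -1`. For `n ≥ 2` the argument `β / |2j + x|` lies in `[0, β / 2]`, so by
evenness and monotonicity the `j`-th summand lies between `β f(0) / (n + 1)²` and
`β f(β/2) / n²`. Summing over `n ≥ 2` gives `ζ(2) - 1 - 1/4` and `ζ(2) - 1`. Negative `x` reduce
to positive ones through `j ↦ -j`.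
-/

open Real

/-- The subtransfer operator `T_β` of the Gauss-type map `x ↦ {-β/x} mod 2ℤ`. -/
noncomputable def Tsub (β : ℝ) (f : ℝ → ℝ) (x : ℝ) : ℝ :=
  ∑' j : {j : ℤ // j ≠ 0},
    (β / (2 * ((j : ℤ) : ℝ) + x) ^ 2) * f (-β / (2 * ((j : ℤ) : ℝ) + x))

-- The `i = 0` term of the finite sum is `1 / 0 ^ 2 = 0`, matching the `n = 0` term of `ζ(2)`.
lemma hasSum_one_div_nat_add_sq (k : ℕ) :
    HasSum (fun n : ℕ => 1 / ((n + k : ℕ) : ℝ) ^ 2)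
      (π ^ 2 / 6 - ∑ i ∈ Finset.range k, 1 / (i : ℝ) ^ 2) :=
  (hasSum_nat_add_iff' k).mpr hasSum_zeta_two

/-- `Equiv.intEquivNat` sends `j ≥ 0` to `2j` and `j < 0` to `-2j - 1`. -/
lemma Equiv.abs_two_mul_add_mem_Icc_intEquivNat {x : ℝ} (hx0 : 0 ≤ x) (hx1 : x ≤ 1) (j : ℤ) :
    |2 * j + x| ∈ Set.Icc (intEquivNat j : ℝ) (intEquivNat j + 1) := by
  cases j with
  | ofNat n =>
    have hn : (intEquivNat (Int.ofNat n) : ℝ) = 2 * n := by exact_mod_cast rfl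
    rw [hn, Int.ofNat_eq_natCast, Int.cast_natCast, abs_of_nonneg (by positivity)]
    constructor <;> linarith
  | negSucc n =>
    have hn : (intEquivNat (Int.negSucc n) : ℝ) = 2 * n + 1 := by exact_mod_cast rfl
    rw [hn, Int.cast_negSucc, abs_of_neg (by push_cast; linarith)]
    push_cast
    constructor <;> linarith

lemma exists_hasSum_nat_add_of_le_of_le {g a b : ℕ → ℝ} {A B : ℝ} (k : ℕ)
    (ha : HasSum a A) (hb : HasSum b B) (ha0 : ∀ n, 0 ≤ a n)
    (hag : ∀ n, a n ≤ g (n + k)) (hgb : ∀ n, g (n + k) ≤ b n) :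
    ∃ S, HasSum g (∑ i ∈ Finset.range k, g i + S) ∧ A ≤ S ∧ S ≤ B := by
  have hg : Summable fun n => g (n + k) :=
    .of_nonneg_of_le (fun n => (ha0 n).trans (hag n)) hgb hb.summable
  refine ⟨_, (hasSum_nat_add_iff' k).mp ?_, hasSum_le hag ha hg.hasSum,
    hasSum_le hgb hg.hasSum hb⟩
  simpa using hg.hasSum

lemma neg_div_mem_Ioo {β d : ℝ} (hβ0 : 0 < β) (hβ1 : β ≤ 1) (hd : 1 < |d|) :
    -β / d ∈ Set.Ioo (-1 : ℝ) 1 := by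
  rw [Set.mem_Ioo, ← abs_lt, abs_div, abs_neg, abs_of_pos hβ0, div_lt_one (by linarith)]
  linarith

lemma apply_eq_apply_abs_of_even {f : ℝ → ℝ} (heven : ∀ x ∈ Set.Ioo (-1 : ℝ) 1, f (-x) = f x)
    {y : ℝ} (hy : y ∈ Set.Ioo (-1 : ℝ) 1) : f y = f |y| := by
  rcases abs_cases y with ⟨h, -⟩ | ⟨h, -⟩
  · rw [h]
  · rw [h, heven y hy]

namespace Tsub

variable {β : ℝ} {f : ℝ → ℝ} {x : ℝ}

noncomputable def term (β : ℝ) (f : ℝ → ℝ) (x : ℝ) (j : ℤ) : ℝ :=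
  β / (2 * (j : ℝ) + x) ^ 2 * f (-β / (2 * (j : ℝ) + x))

lemma indicator_term_neg_comp_neg (heven : ∀ x ∈ Set.Ioo (-1 : ℝ) 1, f (-x) = f x)
    (hβ0 : 0 < β) (hβ1 : β ≤ 1) (hx : x ∈ Set.Ioo (-1 : ℝ) 1) :
    {j : ℤ | j ≠ 0}.indicator (term β f (-x)) ∘ Equiv.neg ℤ =
      {j : ℤ | j ≠ 0}.indicator (term β f x) := by
  ext j
  by_cases hj : j = 0
  · simp [hj]
  have hjx : 1 < |2 * (j : ℝ) + x| := by
    have hj1 : 1 ≤ |(j : ℝ)| := by exact_mod_cast Int.one_le_abs hj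
    have := abs_sub_abs_le_abs_add (2 * (j : ℝ)) x
    rw [abs_mul, abs_two] at this
    linarith [abs_lt.mpr hx]
  have hd : 2 * ((-j : ℤ) : ℝ) + -x = -(2 * j + x) := by push_cast; ring
  rw [Function.comp_apply, Equiv.neg_apply,
    Set.indicator_of_mem (show -j ∈ {j : ℤ | j ≠ 0} from neg_ne_zero.mpr hj),
    Set.indicator_of_mem (show j ∈ {j : ℤ | j ≠ 0} from hj), term, term, hd, neg_sq,
    neg_div_neg_eq, ← heven _ (neg_div_mem_Ioo hβ0 hβ1 hjx), neg_div, neg_neg]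

lemma div_sq_mul_apply_neg_div_mem_Icc (hβ0 : 0 < β) (hβ1 : β ≤ 1)
    (hnn : ∀ x ∈ Set.Ioo (-1 : ℝ) 1, 0 ≤ f x)
    (heven : ∀ x ∈ Set.Ioo (-1 : ℝ) 1, f (-x) = f x)
    (hmono : MonotoneOn f (Set.Ico (0 : ℝ) 1))
    {m d : ℝ} (hm : 2 ≤ m) (hmd : m ≤ |d|) (hdm : |d| ≤ m + 1) :
    β / d ^ 2 * f (-β / d) ∈
      Set.Icc (β * f 0 * (1 / (m + 1) ^ 2)) (β * f (β / 2) * (1 / m ^ 2)) := by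
  have hd : 0 < |d| := by linarith
  have harg : |-β / d| = β / |d| := by rw [abs_div, abs_neg, abs_of_pos hβ0]
  rw [apply_eq_apply_abs_of_even heven (neg_div_mem_Ioo hβ0 hβ1 (by linarith)), harg, ← sq_abs d]
  have hy0 : 0 ≤ β / |d| := by positivity
  have hy2 : β / |d| ≤ β / 2 := div_le_div_of_nonneg_left hβ0.le two_pos (by linarith)
  have hf0 : f 0 ≤ f (β / |d|) := hmono ⟨le_rfl, one_pos⟩ ⟨hy0, by linarith⟩ hy0
  have hf2 : f (β / |d|) ≤ f (β / 2) := hmono ⟨hy0, by linarith⟩ ⟨by positivity, by linarith⟩ hy2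
  have hfy : 0 ≤ f (β / |d|) := hnn _ ⟨by linarith, by linarith⟩
  constructor
  · calc β * f 0 * (1 / (m + 1) ^ 2) ≤ β * f (β / |d|) * (1 / |d| ^ 2) := by
          gcongr
      _ = β / |d| ^ 2 * f (β / |d|) := by ring
  · calc β / |d| ^ 2 * f (β / |d|) = β * f (β / |d|) * (1 / |d| ^ 2) := by ring
      _ ≤ β * f (β / 2) * (1 / m ^ 2) := by
          gcongr
          exact mul_nonneg hβ0.le (hfy.trans hf2)

lemma exists_hasSum_indicator_term_of_nonneg (hβ0 : 0 < β) (hβ1 : β ≤ 1)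
    (hnn : ∀ x ∈ Set.Ioo (-1 : ℝ) 1, 0 ≤ f x)
    (heven : ∀ x ∈ Set.Ioo (-1 : ℝ) 1, f (-x) = f x)
    (hmono : MonotoneOn f (Set.Ico (0 : ℝ) 1))
    (hx0 : 0 ≤ x) (hx1 : x < 1) :
    ∃ S, HasSum ({j : ℤ | j ≠ 0}.indicator (term β f x))
        (β / (2 - x) ^ 2 * f (β / (2 - x)) + S) ∧
      β * (π ^ 2 / 6 - 5 / 4) * f 0 ≤ S ∧ S ≤ β * (π ^ 2 / 6 - 1) * f (β / 2) := by
  set g : ℕ → ℝ := {j : ℤ | j ≠ 0}.indicator (term β f x) ∘ Equiv.intEquivNat.symm with hg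
  have hbounds (n : ℕ) : β * f 0 * (1 / ((n + 3 : ℕ) : ℝ) ^ 2) ≤ g (n + 2) ∧
      g (n + 2) ≤ β * f (β / 2) * (1 / ((n + 2 : ℕ) : ℝ) ^ 2) := by
    set j := Equiv.intEquivNat.symm (n + 2)
    have hj0 : j ≠ 0 := Equiv.intEquivNat.symm.injective.ne (a₂ := 0) (by omega)
    have hgj : g (n + 2) = term β f x j := Set.indicator_of_mem hj0 _
    have hd := Equiv.abs_two_mul_add_mem_Icc_intEquivNat hx0 hx1.le j
    rw [Equiv.apply_symm_apply] at hd
    have h3 : ((n + 3 : ℕ) : ℝ) = (n + 2 : ℕ) + 1 := by push_cast; ring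
    rw [hgj, h3]
    exact div_sq_mul_apply_neg_div_mem_Icc hβ0 hβ1 hnn heven hmono (by simp) hd.1 hd.2
  have hf0 : 0 ≤ f 0 := hnn 0 ⟨by norm_num, one_pos⟩
  obtain ⟨S, hS, hlo, hhi⟩ := exists_hasSum_nat_add_of_le_of_le 2
    ((hasSum_one_div_nat_add_sq 3).mul_left (β * f 0))
    ((hasSum_one_div_nat_add_sq 2).mul_left (β * f (β / 2)))
    (fun n => by positivity) (fun n => (hbounds n).1) (fun n => (hbounds n).2)
  have hg0 : g 0 = 0 := Set.indicator_of_notMem (show (0 : ℤ) ∉ {j : ℤ | j ≠ 0} by simp) _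
  have hg1 : g 1 = β / (2 - x) ^ 2 * f (β / (2 - x)) := by
    have hd : 2 * ((-1 : ℤ) : ℝ) + x = -(2 - x) := by push_cast; ring
    rw [hg, Function.comp_apply, show Equiv.intEquivNat.symm 1 = -1 from rfl,
      Set.indicator_of_mem (by simp), term, hd, neg_sq, neg_div_neg_eq]
  refine ⟨S, ?_, ?_, ?_⟩
  · rw [Finset.sum_range_succ, Finset.sum_range_one, hg0, hg1, zero_add] at hS
    exact (Equiv.intEquivNat.symm.hasSum_iff).mp hS
  · norm_num [Finset.sum_range_succ] at hlo
    linarith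
  · norm_num [Finset.sum_range_succ] at hhi
    linarith

lemma exists_hasSum_indicator_term (hβ0 : 0 < β) (hβ1 : β ≤ 1)
    (hnn : ∀ x ∈ Set.Ioo (-1 : ℝ) 1, 0 ≤ f x)
    (heven : ∀ x ∈ Set.Ioo (-1 : ℝ) 1, f (-x) = f x)
    (hmono : MonotoneOn f (Set.Ico (0 : ℝ) 1))
    (hx : x ∈ Set.Ioo (-1 : ℝ) 1) :
    ∃ S, HasSum ({j : ℤ | j ≠ 0}.indicator (term β f x))
        (β / (2 - |x|) ^ 2 * f (β / (2 - |x|)) + S) ∧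
      β * (π ^ 2 / 6 - 5 / 4) * f 0 ≤ S ∧ S ≤ β * (π ^ 2 / 6 - 1) * f (β / 2) := by
  rcases le_or_gt 0 x with hx0 | hx0
  · rw [abs_of_nonneg hx0]
    exact exists_hasSum_indicator_term_of_nonneg hβ0 hβ1 hnn heven hmono hx0 hx.2
  · rw [abs_of_neg hx0]
    obtain ⟨S, hS, hS'⟩ := exists_hasSum_indicator_term_of_nonneg hβ0 hβ1 hnn heven hmono
      (x := -x) (by linarith) (by linarith [hx.1])
    refine ⟨S, ?_, hS'⟩
    rwa [← (Equiv.neg ℤ).hasSum_iff, indicator_term_neg_comp_neg heven hβ0 hβ1 hx] at hS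

end Tsub

/-- Basic size estimate for `T_β f` when `f` is nonnegative, even, and
nondecreasing on `[0,1)`. -/
theorem stmt_12 (β : ℝ) (hβ0 : 0 < β) (hβ1 : β ≤ 1)
    (f : ℝ → ℝ)
    (hnn : ∀ x ∈ Set.Ioo (-1 : ℝ) 1, 0 ≤ f x)
    (heven : ∀ x ∈ Set.Ioo (-1 : ℝ) 1, f (-x) = f x)
    (hmono : MonotoneOn f (Set.Ico (0 : ℝ) 1)) :
    ∀ x ∈ Set.Ioo (-1 : ℝ) 1,
      Summable (fun j : {j : ℤ // j ≠ 0} =>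
        (β / (2 * ((j : ℤ) : ℝ) + x) ^ 2) * f (-β / (2 * ((j : ℤ) : ℝ) + x))) ∧
      β * (π ^ 2 / 6 - 5 / 4) * f 0 ≤
        Tsub β f x - (β / (2 - |x|) ^ 2) * f (β / (2 - |x|)) ∧
      Tsub β f x - (β / (2 - |x|) ^ 2) * f (β / (2 - |x|)) ≤
        β * (π ^ 2 / 6 - 1) * f (β / 2) := by
  intro x hx
  obtain ⟨S, hS, hlo, hhi⟩ := Tsub.exists_hasSum_indicator_term hβ0 hβ1 hnn heven hmono hx
  have hT : HasSum (fun j : {j : ℤ // j ≠ 0} =>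
      (β / (2 * ((j : ℤ) : ℝ) + x) ^ 2) * f (-β / (2 * ((j : ℤ) : ℝ) + x)))
      (β / (2 - |x|) ^ 2 * f (β / (2 - |x|)) + S) :=
    hasSum_subtype_iff_indicator.mpr hS
  have hTsub : Tsub β f x = β / (2 - |x|) ^ 2 * f (β / (2 - |x|)) + S := hT.tsum_eq
  refine ⟨hT.summable, ?_, ?_⟩ <;> linarith
end

section
/- Fix 0 < β ≤ 1. If f : (−1,1) → ℝ is odd (f(−x) = −f(x)) and strictly increasing, then the defining series for T_β f(x) converges absolutely for every x ∈ (−1,1), and the function T_β f is odd and strictly increasing on (−1,1). -/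
open Real

/-!
The `j`-th summand of `T_β f (x)` is `g (2j + x)`, where `g u = β / u² · f (-β / u)`
(`branchTerm β f u`). For `u > β` the weight `β / u²` is positive and decreasing while
`f (-β / u)` is negative and increasing, so `g` is strictly increasing there; oddness of `f`
makes `g` odd, which carries this over to `u < -β` and, after reindexing `j ↦ -j`, makes `T_β f`
odd. Since `|2j + x| ≥ |j|` and `|2j + x| ≥ 2 - |x|`, the summands are bounded by
`β f (β / (2 - |x|)) / j²`, which gives absolute convergence; strict monotonicity then follows
termwise.
-/

open Set

section Denominator

variable {x : ℝ} {j : ℤ}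

lemma one_le_abs_intCast (hj : j ≠ 0) : (1 : ℝ) ≤ |(j : ℝ)| := by
  exact_mod_cast Int.one_le_abs hj

lemma two_mul_abs_intCast_sub_abs_le (x : ℝ) (j : ℤ) :
    2 * |(j : ℝ)| - |x| ≤ |2 * (j : ℝ) + x| := by
  simpa [abs_mul] using abs_sub_abs_le_abs_add (2 * (j : ℝ)) x

lemma two_sub_abs_le_abs_two_mul_intCast_add (hj : j ≠ 0) :
    2 - |x| ≤ |2 * (j : ℝ) + x| := by
  linarith [two_mul_abs_intCast_sub_abs_le x j, one_le_abs_intCast hj]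

lemma abs_intCast_le_abs_two_mul_intCast_add (hx : |x| ≤ 1) (hj : j ≠ 0) :
    |(j : ℝ)| ≤ |2 * (j : ℝ) + x| := by
  linarith [two_mul_abs_intCast_sub_abs_le x j, one_le_abs_intCast hj]

variable {β : ℝ}

lemma div_two_sub_abs_lt_one (hβ : β ≤ 1) (hx : |x| < 1) : β / (2 - |x|) < 1 := by
  rw [div_lt_one (by linarith)]
  linarith

lemma abs_neg_div_two_mul_intCast_add_le (hβ : 0 ≤ β) (hx : |x| < 1) (hj : j ≠ 0) :
    |-β / (2 * (j : ℝ) + x)| ≤ β / (2 - |x|) := by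
  rw [abs_div, abs_neg, abs_of_nonneg hβ]
  exact div_le_div_of_nonneg_left hβ (by linarith) (two_sub_abs_le_abs_two_mul_intCast_add hj)

lemma neg_div_two_mul_intCast_add_mem_Ioo (hβ0 : 0 ≤ β) (hβ1 : β ≤ 1) (hx : |x| < 1)
    (hj : j ≠ 0) : -β / (2 * (j : ℝ) + x) ∈ Ioo (-1 : ℝ) 1 :=
  abs_lt.mp ((abs_neg_div_two_mul_intCast_add_le hβ0 hx hj).trans_lt
    (div_two_sub_abs_lt_one hβ1 hx))

end Denominator

lemma StrictMonoOn.Iio_neg_of_odd {α γ : Type*} [AddCommGroup α] [LinearOrder α]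
    [IsOrderedAddMonoid α] [AddCommGroup γ] [PartialOrder γ] [IsOrderedAddMonoid γ]
    {g : α → γ} {a : α} (hodd : ∀ u ∈ Ioi a, g (-u) = -g u) (hg : StrictMonoOn g (Ioi a)) :
    StrictMonoOn g (Iio (-a)) := by
  intro u hu v hv huv
  have hu' : a < -u := lt_neg_of_lt_neg hu
  have hv' : a < -v := lt_neg_of_lt_neg hv
  have h := hg hv' hu' (neg_lt_neg huv)
  rwa [← neg_neg u, ← neg_neg v, hodd _ hu', hodd _ hv', neg_lt_neg_iff]

section OddMonotone

variable {f : ℝ → ℝ}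

lemma map_zero_of_odd (hodd : ∀ x ∈ Ioo (-1 : ℝ) 1, f (-x) = -f x) : f 0 = 0 := by
  have h := hodd 0 (by norm_num)
  rw [neg_zero] at h
  linarith

lemma abs_le_of_odd_of_monotoneOn (hodd : ∀ x ∈ Ioo (-1 : ℝ) 1, f (-x) = -f x)
    (hmono : MonotoneOn f (Ioo (-1 : ℝ) 1)) {c t : ℝ} (hc : c < 1) (ht : |t| ≤ c) :
    |f t| ≤ f c := by
  obtain ⟨hlo, hhi⟩ := abs_le.mp ht
  have hc_mem : c ∈ Ioo (-1 : ℝ) 1 := ⟨by linarith [abs_nonneg t], hc⟩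
  have hnc_mem : -c ∈ Ioo (-1 : ℝ) 1 := ⟨by linarith, by linarith [abs_nonneg t]⟩
  have ht_mem : t ∈ Ioo (-1 : ℝ) 1 := ⟨by linarith, by linarith⟩
  refine abs_le.mpr ⟨?_, hmono ht_mem hc_mem hhi⟩
  rw [← hodd c hc_mem]
  exact hmono hnc_mem ht_mem hlo

end OddMonotone

noncomputable def branchTerm (β : ℝ) (f : ℝ → ℝ) (u : ℝ) : ℝ :=
  β / u ^ 2 * f (-β / u)

section BranchTerm

variable {β : ℝ} {f : ℝ → ℝ}

lemma neg_div_mem_Ioo_of_lt (hβ : 0 < β) {u : ℝ} (hu : β < u) : -β / u ∈ Ioo (-1 : ℝ) 1 :=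
  ⟨by rw [lt_div_iff₀ (hβ.trans hu)]; linarith, by rw [div_lt_one (hβ.trans hu)]; linarith⟩

lemma branchTerm_neg (hodd : ∀ x ∈ Ioo (-1 : ℝ) 1, f (-x) = -f x) {u : ℝ}
    (hu : -β / u ∈ Ioo (-1 : ℝ) 1) : branchTerm β f (-u) = -branchTerm β f u := by
  rw [branchTerm, branchTerm, neg_sq, div_neg, hodd _ hu, mul_neg]

lemma strictMonoOn_branchTerm_Ioi (hβ : 0 < β) (hodd : ∀ x ∈ Ioo (-1 : ℝ) 1, f (-x) = -f x)
    (hmono : StrictMonoOn f (Ioo (-1 : ℝ) 1)) : StrictMonoOn (branchTerm β f) (Ioi β) := by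
  intro u (hu : β < u) v (hv : β < v) huv
  have hu0 : 0 < u := hβ.trans hu
  have hv0 : 0 < v := hβ.trans hv
  have hv_mem := neg_div_mem_Ioo_of_lt hβ hv
  have hval : f (-β / u) < f (-β / v) := hmono (neg_div_mem_Ioo_of_lt hβ hu) hv_mem <| by
    rw [neg_div, neg_div, neg_lt_neg_iff]
    exact div_lt_div_of_pos_left hβ hu0 huv
  have hval_neg : f (-β / v) ≤ 0 := by
    rw [← map_zero_of_odd hodd]
    exact hmono.monotoneOn hv_mem (by norm_num)
      (div_nonpos_of_nonpos_of_nonneg (by linarith) hv0.le)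
  have hweight : β / v ^ 2 ≤ β / u ^ 2 :=
    div_le_div_of_nonneg_left hβ.le (by positivity) (pow_le_pow_left₀ hu0.le huv.le 2)
  calc branchTerm β f u < β / u ^ 2 * f (-β / v) := mul_lt_mul_of_pos_left hval (by positivity)
    _ ≤ branchTerm β f v := mul_le_mul_of_nonpos_right hweight hval_neg

lemma strictMonoOn_branchTerm_two_mul_intCast_add (hβ0 : 0 < β) (hβ1 : β ≤ 1)
    (hodd : ∀ x ∈ Ioo (-1 : ℝ) 1, f (-x) = -f x) (hmono : StrictMonoOn f (Ioo (-1 : ℝ) 1))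
    {j : ℤ} (hj : j ≠ 0) :
    StrictMonoOn (fun x => branchTerm β f (2 * (j : ℝ) + x)) (Ioo (-1 : ℝ) 1) := by
  have hIoi := strictMonoOn_branchTerm_Ioi hβ0 hodd hmono
  intro x hx y hy hxy
  rcases hj.lt_or_gt with hneg | hpos
  · have hj1 : (j : ℝ) ≤ -1 := by exact_mod_cast Int.le_sub_one_of_lt hneg
    have hIio := hIoi.Iio_neg_of_odd fun _ hu => branchTerm_neg hodd (neg_div_mem_Ioo_of_lt hβ0 hu)
    exact hIio (show 2 * (j : ℝ) + x < -β by linarith [hx.2])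
      (show 2 * (j : ℝ) + y < -β by linarith [hy.2]) (by linarith)
  · have hj1 : (1 : ℝ) ≤ j := by exact_mod_cast hpos
    exact hIoi (show β < 2 * (j : ℝ) + x by linarith [hx.1])
      (show β < 2 * (j : ℝ) + y by linarith [hy.1]) (by linarith)

lemma abs_branchTerm_two_mul_intCast_add_le (hβ0 : 0 < β) (hβ1 : β ≤ 1)
    (hodd : ∀ x ∈ Ioo (-1 : ℝ) 1, f (-x) = -f x) (hmono : MonotoneOn f (Ioo (-1 : ℝ) 1))
    {x : ℝ} (hx : |x| < 1) {j : ℤ} (hj : j ≠ 0) :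
    |branchTerm β f (2 * j + x)| ≤ β * f (β / (2 - |x|)) * (1 / (j : ℝ) ^ 2) := by
  have hj2 : 0 < (j : ℝ) ^ 2 := by positivity
  have hweight : β / (2 * (j : ℝ) + x) ^ 2 ≤ β / (j : ℝ) ^ 2 :=
    div_le_div_of_nonneg_left hβ0.le hj2
      (sq_le_sq.mpr (abs_intCast_le_abs_two_mul_intCast_add hx.le hj))
  have hval := abs_le_of_odd_of_monotoneOn hodd hmono (div_two_sub_abs_lt_one hβ1 hx)
    (abs_neg_div_two_mul_intCast_add_le hβ0.le hx hj)
  calc |branchTerm β f (2 * j + x)|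
      = β / (2 * (j : ℝ) + x) ^ 2 * |f (-β / (2 * (j : ℝ) + x))| := by
        rw [branchTerm, abs_mul, abs_of_nonneg (by positivity)]
    _ ≤ β / (j : ℝ) ^ 2 * f (β / (2 - |x|)) :=
        mul_le_mul hweight hval (abs_nonneg _) (by positivity)
    _ = β * f (β / (2 - |x|)) * (1 / (j : ℝ) ^ 2) := by ring

lemma summable_abs_branchTerm_two_mul_intCast_add (hβ0 : 0 < β) (hβ1 : β ≤ 1)
    (hodd : ∀ x ∈ Ioo (-1 : ℝ) 1, f (-x) = -f x) (hmono : MonotoneOn f (Ioo (-1 : ℝ) 1))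
    {x : ℝ} (hx : x ∈ Ioo (-1 : ℝ) 1) :
    Summable fun j : {j : ℤ // j ≠ 0} => |branchTerm β f (2 * (j : ℝ) + x)| := by
  have hmajorant : Summable fun j : ℤ => β * f (β / (2 - |x|)) * (1 / (j : ℝ) ^ 2) :=
    (Real.summable_one_div_int_pow.mpr one_lt_two).mul_left _
  exact (hmajorant.subtype _).of_nonneg_of_le (fun _ => abs_nonneg _)
    fun j => abs_branchTerm_two_mul_intCast_add_le hβ0 hβ1 hodd hmono (abs_lt.mpr hx) j.2

end BranchTerm

section Tsub

variable {β : ℝ} {f : ℝ → ℝ}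

lemma Tsub_neg (hβ0 : 0 < β) (hβ1 : β ≤ 1) (hodd : ∀ x ∈ Ioo (-1 : ℝ) 1, f (-x) = -f x)
    {x : ℝ} (hx : x ∈ Ioo (-1 : ℝ) 1) : Tsub β f (-x) = -Tsub β f x := by
  let e : {j : ℤ // j ≠ 0} ≃ {j : ℤ // j ≠ 0} :=
    (Equiv.neg ℤ).subtypeEquiv fun _ => neg_ne_zero.symm
  calc Tsub β f (-x)
      = ∑' j : {j : ℤ // j ≠ 0}, branchTerm β f (2 * ((e j : ℤ) : ℝ) + -x) :=
        (e.tsum_eq _).symm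
    _ = ∑' j : {j : ℤ // j ≠ 0}, -branchTerm β f (2 * (j : ℝ) + x) := by
        refine tsum_congr fun j => ?_
        have hflip : 2 * ((e j : ℤ) : ℝ) + -x = -(2 * (j : ℝ) + x) := by
          change 2 * ((-(j : ℤ) : ℤ) : ℝ) + -x = _
          push_cast
          ring
        rw [hflip, branchTerm_neg hodd
          (neg_div_two_mul_intCast_add_mem_Ioo hβ0.le hβ1 (abs_lt.mpr hx) j.2)]
    _ = -Tsub β f x := tsum_neg

lemma strictMonoOn_Tsub (hβ0 : 0 < β) (hβ1 : β ≤ 1)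
    (hodd : ∀ x ∈ Ioo (-1 : ℝ) 1, f (-x) = -f x) (hmono : StrictMonoOn f (Ioo (-1 : ℝ) 1)) :
    StrictMonoOn (Tsub β f) (Ioo (-1 : ℝ) 1) := by
  intro x hx y hy hxy
  have hterm {j : ℤ} (hj : j ≠ 0) :=
    strictMonoOn_branchTerm_two_mul_intCast_add hβ0 hβ1 hodd hmono hj hx hy hxy
  have hsum {z : ℝ} (hz : z ∈ Ioo (-1 : ℝ) 1) :=
    (summable_abs_branchTerm_two_mul_intCast_add hβ0 hβ1 hodd hmono.monotoneOn hz).of_abs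
  exact Summable.tsum_lt_tsum (i := ⟨1, one_ne_zero⟩) (fun j => (hterm j.2).le)
    (hterm one_ne_zero) (hsum hx) (hsum hy)

end Tsub

/-- `T_β` preserves the class of odd strictly increasing functions on `(-1,1)`. -/
theorem stmt_13 (β : ℝ) (hβ0 : 0 < β) (hβ1 : β ≤ 1)
    (f : ℝ → ℝ)
    (hodd : ∀ x ∈ Set.Ioo (-1 : ℝ) 1, f (-x) = -f x)
    (hmono : StrictMonoOn f (Set.Ioo (-1 : ℝ) 1)) :
    (∀ x ∈ Set.Ioo (-1 : ℝ) 1,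
      Summable (fun j : {j : ℤ // j ≠ 0} =>
        |(β / (2 * ((j : ℤ) : ℝ) + x) ^ 2) * f (-β / (2 * ((j : ℤ) : ℝ) + x))|)) ∧
    (∀ x ∈ Set.Ioo (-1 : ℝ) 1, Tsub β f (-x) = -(Tsub β f x)) ∧
    StrictMonoOn (Tsub β f) (Set.Ioo (-1 : ℝ) 1) :=
  ⟨fun _ hx => summable_abs_branchTerm_two_mul_intCast_add hβ0 hβ1 hodd hmono.monotoneOn hx,
    fun _ hx => Tsub_neg hβ0 hβ1 hodd hx, strictMonoOn_Tsub hβ0 hβ1 hodd hmono⟩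
end

section
/- Fix 0 < β ≤ 1. If f : (−1,1) → ℝ is even (f(−x) = f(x)), convex on (−1,1), and nonnegative, then the defining series for T_β f(x) converges for every x ∈ (−1,1), and the function T_β f is even, convex on (−1,1), and nonnegative. -/
open Real

section aux
variable {f : ℝ → ℝ} {β : ℝ}

lemma my_fmono (heven : ∀ x ∈ Set.Ioo (-1 : ℝ) 1, f (-x) = f x)
    (hconv : ConvexOn ℝ (Set.Ioo (-1 : ℝ) 1) f)
    {u v : ℝ} (hu : 0 ≤ u) (huv : u ≤ v) (hv : v < 1) : f u ≤ f v := by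
  rcases eq_or_lt_of_le huv with h | h
  · rw [h]
  have hv0 : 0 < v := lt_of_le_of_lt hu h
  have hvne : v ≠ 0 := hv0.ne'
  have hmemn : (-v) ∈ Set.Ioo (-1:ℝ) 1 := ⟨by linarith, by linarith⟩
  have hmemv : v ∈ Set.Ioo (-1:ℝ) 1 := ⟨by linarith, hv⟩
  have ha : (0:ℝ) ≤ (v - u) / (2*v) := div_nonneg (by linarith) (by linarith)
  have hb : (0:ℝ) ≤ (v + u) / (2*v) := div_nonneg (by linarith) (by linarith)
  have hab : (v-u)/(2*v) + (v+u)/(2*v) = 1 := by field_simp; ring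
  have h2 := hconv.2 hmemn hmemv ha hb hab
  simp only [smul_eq_mul] at h2
  have harg : (v-u)/(2*v) * (-v) + (v+u)/(2*v) * v = u := by field_simp; ring
  rw [harg, heven v hmemv] at h2
  have : (v-u)/(2*v) * f v + (v+u)/(2*v) * f v = f v := by
    rw [← add_mul, hab, one_mul]
  linarith [h2, this.le]

lemma my_Fmono (heven : ∀ x ∈ Set.Ioo (-1 : ℝ) 1, f (-x) = f x)
    (hconv : ConvexOn ℝ (Set.Ioo (-1 : ℝ) 1) f)
    (hnn : ∀ x ∈ Set.Ioo (-1 : ℝ) 1, 0 ≤ f x)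
    {u v : ℝ} (hu : 0 ≤ u) (huv : u ≤ v) (hv : v < 1) :
    u^2 * f u ≤ v^2 * f v :=
  mul_le_mul (by nlinarith) (my_fmono heven hconv hu huv hv)
    (hnn u ⟨by linarith, by linarith⟩) (by positivity)

lemma my_Fconv (heven : ∀ x ∈ Set.Ioo (-1 : ℝ) 1, f (-x) = f x)
    (hconv : ConvexOn ℝ (Set.Ioo (-1 : ℝ) 1) f)
    (hnn : ∀ x ∈ Set.Ioo (-1 : ℝ) 1, 0 ≤ f x)
    {u w a b : ℝ} (hu : 0 ≤ u) (huw : u ≤ w) (hw : w < 1)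
    (ha : 0 ≤ a) (hb : 0 ≤ b) (hab : a + b = 1) :
    (a*u+b*w)^2 * f (a*u+b*w) ≤ a * (u^2 * f u) + b * (w^2 * f w) := by
  set z := a*u+b*w with hz
  have hzu : u ≤ z := by nlinarith
  have hzw : z ≤ w := by nlinarith
  have hz0 : 0 ≤ z := le_trans hu hzu
  have hmu : u ∈ Set.Ioo (-1:ℝ) 1 := ⟨by linarith, by linarith⟩
  have hmw : w ∈ Set.Ioo (-1:ℝ) 1 := ⟨by linarith, hw⟩
  have hfz := hconv.2 hmu hmw ha hb hab
  simp only [smul_eq_mul] at hfz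
  have hfu0 := hnn u hmu
  have hfw0 := hnn w hmw
  have hfuw := my_fmono heven hconv hu huw hw
  have hsq : z^2 ≤ a*u^2 + b*w^2 := by
    nlinarith [mul_nonneg (mul_nonneg ha hb) (sq_nonneg (u-w))]
  have h1 : z^2 * f z ≤ z^2 * (a * f u + b * f w) :=
    mul_le_mul_of_nonneg_left hfz (by positivity)
  have hA : 0 ≤ a * ((f w - f u) * (z^2 - u^2)) :=
    mul_nonneg ha (mul_nonneg (by linarith) (by nlinarith))
  have hB : f w * z^2 ≤ f w * (a*u^2 + b*w^2) :=
    mul_le_mul_of_nonneg_left hsq hfw0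
  have hC : a*(f w*z^2) + b*(f w*z^2) = f w*z^2 := by rw [← add_mul, hab, one_mul]
  nlinarith [h1, hA, hB, hC]

lemma my_inv_convex {p q a b : ℝ} (hp : 0 < p) (hq : 0 < q) (ha : 0 ≤ a) (hb : 0 ≤ b)
    (hab : a + b = 1) : (a*p+b*q)⁻¹ ≤ a*p⁻¹ + b*q⁻¹ := by
  have hz : 0 < a*p+b*q := by
    rcases eq_or_lt_of_le ha with h | h
    · have hb1 : b = 1 := by linarith
      rw [← h, hb1]; simpa using hq
    · have : 0 ≤ b*q := mul_nonneg hb hq.le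
      nlinarith [mul_pos h hp]
  have key : 1 ≤ (a*p⁻¹+b*q⁻¹) * (a*p+b*q) := by
    have h1 : (a*p⁻¹+b*q⁻¹) * (a*p+b*q) = a^2 + b^2 + a*b*(p/q) + a*b*(q/p) := by
      field_simp; ring
    have h2 : 2 ≤ p/q + q/p := by
      rw [div_add_div _ _ hq.ne' hp.ne', le_div_iff₀ (by positivity)]
      nlinarith [sq_nonneg (p-q)]
    nlinarith [mul_nonneg (mul_nonneg ha hb) (by linarith : (0:ℝ) ≤ p/q + q/p - 2)]
  rw [inv_eq_one_div, div_le_iff₀ hz]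
  linarith




lemma my_abs_t (j : ℤ) (hj : j ≠ 0) (x : ℝ) (hx : x ∈ Set.Ioo (-1:ℝ) 1) :
    2*|(j:ℝ)| - |x| ≤ |2*(j:ℝ)+x| := by
  have h : |2*(j:ℝ)| ≤ |2*(j:ℝ)+x| + |x| := by
    calc |2*(j:ℝ)| = |(2*(j:ℝ)+x) + (-x)| := by ring_nf
    _ ≤ |2*(j:ℝ)+x| + |(-x)| := abs_add_le _ _
    _ = |2*(j:ℝ)+x| + |x| := by rw [abs_neg]
  have h2 : |2*(j:ℝ)| = 2*|(j:ℝ)| := by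
    rw [abs_mul]; norm_num
  linarith

lemma my_j_one (j : ℤ) (hj : j ≠ 0) : (1:ℝ) ≤ |(j:ℝ)| := by
  rw [← Int.cast_abs, ← Int.cast_one, Int.cast_le]
  exact Int.one_le_abs hj

lemma my_abs_gt (j : ℤ) (hj : j ≠ 0) (x : ℝ) (hx : x ∈ Set.Ioo (-1:ℝ) 1) :
    1 < |2*(j:ℝ)+x| ∧ 2 - |x| ≤ |2*(j:ℝ)+x| ∧ |(j:ℝ)| ≤ |2*(j:ℝ)+x| := by
  have h1 := my_abs_t j hj x hx
  have h2 := my_j_one j hj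
  have h3 : |x| < 1 := abs_lt.2 ⟨hx.1, hx.2⟩
  exact ⟨by linarith, by linarith, by linarith⟩

lemma my_tne (j : ℤ) (hj : j ≠ 0) (x : ℝ) (hx : x ∈ Set.Ioo (-1:ℝ) 1) :
    2*(j:ℝ)+x ≠ 0 := by
  intro h
  have := (my_abs_gt j hj x hx).1
  rw [h] at this; simp at this; linarith

lemma my_v_mem (hβ0 : 0 < β) (hβ1 : β ≤ 1) (j : ℤ) (hj : j ≠ 0) (x : ℝ)
    (hx : x ∈ Set.Ioo (-1:ℝ) 1) : -β/(2*(j:ℝ)+x) ∈ Set.Ioo (-1:ℝ) 1 := by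
  have h1 := (my_abs_gt j hj x hx).1
  have : |(-β/(2*(j:ℝ)+x))| < 1 := by
    rw [abs_div, abs_neg, abs_of_pos hβ0, div_lt_one (by linarith)]
    linarith
  have := abs_lt.mp this
  exact ⟨this.1, this.2⟩

lemma my_W_mem (hβ0 : 0 < β) (hβ1 : β ≤ 1) (j : ℤ) (hj : j ≠ 0) (x : ℝ)
    (hx : x ∈ Set.Ioo (-1:ℝ) 1) :
    0 < β/|2*(j:ℝ)+x| ∧ β/|2*(j:ℝ)+x| < 1 := by
  have h1 := (my_abs_gt j hj x hx).1
  constructor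
  · exact div_pos hβ0 (by linarith)
  · rw [div_lt_one (by linarith)]; linarith

lemma my_term_eq (hβ0 : 0 < β) (hβ1 : β ≤ 1)
    (heven : ∀ x ∈ Set.Ioo (-1 : ℝ) 1, f (-x) = f x)
    (j : ℤ) (hj : j ≠ 0) (x : ℝ) (hx : x ∈ Set.Ioo (-1:ℝ) 1) :
    β/(2*(j:ℝ)+x)^2 * f (-β/(2*(j:ℝ)+x))
      = (1/β) * ((β/|2*(j:ℝ)+x|)^2 * f (β/|2*(j:ℝ)+x|)) := by
  have htne := my_tne j hj x hx
  have hane : |2*(j:ℝ)+x| ≠ 0 := abs_ne_zero.mpr htne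
  have hfe : f (-β/(2*(j:ℝ)+x)) = f (β/|2*(j:ℝ)+x|) := by
    have hm := my_v_mem hβ0 hβ1 j hj x hx
    rcases abs_cases (2*(j:ℝ)+x) with ⟨h, _⟩ | ⟨h, _⟩
    · have hmem : β/(2*(j:ℝ)+x) ∈ Set.Ioo (-1:ℝ) 1 := by
        refine ⟨?_, ?_⟩
        · have := hm.2; rw [neg_div] at this; linarith
        · have := hm.1; rw [neg_div] at this; linarith
      rw [h, neg_div]
      exact heven _ hmem
    · rw [h, div_neg, neg_div]
  rw [hfe, div_pow, sq_abs]
  field_simp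



lemma my_W_convex (hβ0 : 0 < β) (j : ℤ) (hj : j ≠ 0) {x y a b : ℝ}
    (hx : x ∈ Set.Ioo (-1:ℝ) 1) (hy : y ∈ Set.Ioo (-1:ℝ) 1)
    (ha : 0 ≤ a) (hb : 0 ≤ b) (hab : a + b = 1) :
    β/|2*(j:ℝ)+(a*x+b*y)| ≤ a*(β/|2*(j:ℝ)+x|) + b*(β/|2*(j:ℝ)+y|) := by
  have hteq : 2*(j:ℝ)+(a*x+b*y) = a*(2*(j:ℝ)+x) + b*(2*(j:ℝ)+y) := by
    linear_combination (-2*(j:ℝ))*hab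
  rcases hj.lt_or_gt with hneg | hpos
  · have hj1 : (j:ℝ) ≤ -1 := by exact_mod_cast (by omega : j ≤ -1)
    have hpx : 0 < -(2*(j:ℝ)+x) := by nlinarith [hx.2]
    have hpy : 0 < -(2*(j:ℝ)+y) := by nlinarith [hy.2]
    have h1x : (1:ℝ) ≤ -(2*(j:ℝ)+x) := by nlinarith [hx.2]
    have h1y : (1:ℝ) ≤ -(2*(j:ℝ)+y) := by nlinarith [hy.2]
    have hpz : 0 < a*(-(2*(j:ℝ)+x)) + b*(-(2*(j:ℝ)+y)) := by
      nlinarith [mul_le_mul_of_nonneg_left h1x ha, mul_le_mul_of_nonneg_left h1y hb]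
    calc β/|2*(j:ℝ)+(a*x+b*y)|
        = β * (a*(-(2*(j:ℝ)+x)) + b*(-(2*(j:ℝ)+y)))⁻¹ := by
          rw [abs_of_neg (by linarith [hpz] : 2*(j:ℝ)+(a*x+b*y) < 0), hteq,
            div_eq_mul_inv]
          ring_nf
      _ ≤ β * (a*(-(2*(j:ℝ)+x))⁻¹ + b*(-(2*(j:ℝ)+y))⁻¹) :=
          mul_le_mul_of_nonneg_left (my_inv_convex hpx hpy ha hb hab) hβ0.le
      _ = a*(β/|2*(j:ℝ)+x|) + b*(β/|2*(j:ℝ)+y|) := by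
          rw [abs_of_neg (by linarith : 2*(j:ℝ)+x < 0),
            abs_of_neg (by linarith : 2*(j:ℝ)+y < 0)]
          rw [div_eq_mul_inv, div_eq_mul_inv]
          ring
  · have hj1 : (1:ℝ) ≤ (j:ℝ) := by exact_mod_cast hpos
    have hpx : 0 < 2*(j:ℝ)+x := by nlinarith [hx.1]
    have hpy : 0 < 2*(j:ℝ)+y := by nlinarith [hy.1]
    have h1x : (1:ℝ) ≤ 2*(j:ℝ)+x := by nlinarith [hx.1]
    have h1y : (1:ℝ) ≤ 2*(j:ℝ)+y := by nlinarith [hy.1]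
    have hpz : 0 < a*(2*(j:ℝ)+x) + b*(2*(j:ℝ)+y) := by
      nlinarith [mul_le_mul_of_nonneg_left h1x ha, mul_le_mul_of_nonneg_left h1y hb]
    calc β/|2*(j:ℝ)+(a*x+b*y)|
        = β * (a*(2*(j:ℝ)+x) + b*(2*(j:ℝ)+y))⁻¹ := by
          rw [abs_of_pos (by linarith [hpz] : 0 < 2*(j:ℝ)+(a*x+b*y)), hteq,
            div_eq_mul_inv]
      _ ≤ β * (a*(2*(j:ℝ)+x)⁻¹ + b*(2*(j:ℝ)+y)⁻¹) :=
          mul_le_mul_of_nonneg_left (my_inv_convex hpx hpy ha hb hab) hβ0.le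
      _ = a*(β/|2*(j:ℝ)+x|) + b*(β/|2*(j:ℝ)+y|) := by
          rw [abs_of_pos hpx, abs_of_pos hpy, div_eq_mul_inv, div_eq_mul_inv]
          ring


lemma my_F_comb (heven : ∀ x ∈ Set.Ioo (-1 : ℝ) 1, f (-x) = f x)
    (hconv : ConvexOn ℝ (Set.Ioo (-1 : ℝ) 1) f)
    (hnn : ∀ x ∈ Set.Ioo (-1 : ℝ) 1, 0 ≤ f x)
    {Wx Wy a b : ℝ} (hx0 : 0 < Wx) (hx1 : Wx < 1) (hy0 : 0 < Wy) (hy1 : Wy < 1)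
    (ha : 0 ≤ a) (hb : 0 ≤ b) (hab : a + b = 1) :
    (a*Wx+b*Wy)^2 * f (a*Wx+b*Wy) ≤ a * (Wx^2 * f Wx) + b * (Wy^2 * f Wy) := by
  rcases le_total Wx Wy with h | h
  · exact my_Fconv heven hconv hnn hx0.le h hy1 ha hb hab
  · have := my_Fconv heven hconv hnn hy0.le h hx1 hb ha (by linarith)
    rw [show b*Wy+a*Wx = a*Wx+b*Wy by ring] at this
    linarith

lemma my_term_convexOn (hβ0 : 0 < β) (hβ1 : β ≤ 1)
    (heven : ∀ x ∈ Set.Ioo (-1 : ℝ) 1, f (-x) = f x)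
    (hconv : ConvexOn ℝ (Set.Ioo (-1 : ℝ) 1) f)
    (hnn : ∀ x ∈ Set.Ioo (-1 : ℝ) 1, 0 ≤ f x) (j : ℤ) (hj : j ≠ 0) :
    ConvexOn ℝ (Set.Ioo (-1:ℝ) 1)
      (fun x => β/(2*(j:ℝ)+x)^2 * f (-β/(2*(j:ℝ)+x))) := by
  refine ⟨convex_Ioo _ _, ?_⟩
  intro x hx y hy a b ha hb hab
  simp only [smul_eq_mul]
  have hz : a*x+b*y ∈ Set.Ioo (-1:ℝ) 1 := by
    have := (convex_Ioo (-1:ℝ) 1) hx hy ha hb hab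
    simpa using this
  rw [my_term_eq hβ0 hβ1 heven j hj x hx, my_term_eq hβ0 hβ1 heven j hj y hy,
    my_term_eq hβ0 hβ1 heven j hj _ hz]
  have hWx := my_W_mem hβ0 hβ1 j hj x hx
  have hWy := my_W_mem hβ0 hβ1 j hj y hy
  have hWz := my_W_mem hβ0 hβ1 j hj _ hz
  have hcomb := my_W_convex (β := β) hβ0 j hj hx hy ha hb hab
  have hs1 : a*(β/|2*(j:ℝ)+x|) + b*(β/|2*(j:ℝ)+y|) < 1 := by
    rcases le_total (β/|2*(j:ℝ)+x|) (β/|2*(j:ℝ)+y|) with h | h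
    · nlinarith [mul_le_mul_of_nonneg_left h ha, hWy.2]
    · nlinarith [mul_le_mul_of_nonneg_left h hb, hWx.2]
  have hchain := my_Fmono heven hconv hnn hWz.1.le hcomb hs1
  have hF := my_F_comb heven hconv hnn hWx.1 hWx.2 hWy.1 hWy.2 ha hb hab
  have hfinal : (β/|2*(j:ℝ)+(a*x+b*y)|)^2 * f (β/|2*(j:ℝ)+(a*x+b*y)|)
      ≤ a * ((β/|2*(j:ℝ)+x|)^2 * f (β/|2*(j:ℝ)+x|))
        + b * ((β/|2*(j:ℝ)+y|)^2 * f (β/|2*(j:ℝ)+y|)) := le_trans hchain hF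
  have hmul := mul_le_mul_of_nonneg_left hfinal (by positivity : (0:ℝ) ≤ 1/β)
  nlinarith [hmul]


lemma my_summable (hβ0 : 0 < β) (hβ1 : β ≤ 1)
    (heven : ∀ x ∈ Set.Ioo (-1 : ℝ) 1, f (-x) = f x)
    (hconv : ConvexOn ℝ (Set.Ioo (-1 : ℝ) 1) f)
    (hnn : ∀ x ∈ Set.Ioo (-1 : ℝ) 1, 0 ≤ f x)
    (x : ℝ) (hx : x ∈ Set.Ioo (-1:ℝ) 1) :
    Summable (fun j : {j : ℤ // j ≠ 0} =>
      (β / (2 * ((j : ℤ) : ℝ) + x) ^ 2) * f (-β / (2 * ((j : ℤ) : ℝ) + x))) := by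
  have hx1 : |x| < 1 := abs_lt.2 ⟨hx.1, hx.2⟩
  set c := β/(2-|x|) with hc
  have hc1 : c < 1 := by rw [hc, div_lt_one (by linarith)]; linarith
  have hc0 : 0 < c := div_pos hβ0 (by linarith)
  have hfc0 : 0 ≤ f c := hnn c ⟨by linarith, hc1⟩
  have hsum : Summable (fun j : {j:ℤ//j≠0} => (β * f c) * (((j:ℤ):ℝ)^2)⁻¹) := by
    apply Summable.mul_left
    have h : Summable (fun j : ℤ => (((j:ℝ))^2)⁻¹) := by
      have := summable_one_div_int_pow.mpr (by norm_num : 1 < 2)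
      simpa [one_div] using this
    exact h.subtype _
  apply Summable.of_nonneg_of_le _ _ hsum
  · intro j
    exact mul_nonneg (by positivity) (hnn _ (my_v_mem hβ0 hβ1 j.1 j.2 x hx))
  · intro j
    have habs := my_abs_gt j.1 j.2 x hx
    have hW := my_W_mem hβ0 hβ1 j.1 j.2 x hx
    have hj1 : (1:ℝ) ≤ |((j:ℤ):ℝ)| := by
      rw [← Int.cast_abs, ← Int.cast_one, Int.cast_le]
      exact Int.one_le_abs j.2
    have hjne : (((j:ℤ):ℝ))^2 ≠ 0 := pow_ne_zero 2 (Int.cast_ne_zero.mpr j.2)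
    rw [my_term_eq hβ0 hβ1 heven j.1 j.2 x hx]
    have hWc : β/|2*((j:ℤ):ℝ)+x| ≤ c := by
      rw [hc]
      exact div_le_div_of_nonneg_left hβ0.le (by linarith) habs.2.1
    have hfWc : f (β/|2*((j:ℤ):ℝ)+x|) ≤ f c :=
      my_fmono heven hconv hW.1.le hWc hc1
    have hsq : (β/|2*((j:ℤ):ℝ)+x|)^2 ≤ β^2 * ((((j:ℤ):ℝ))^2)⁻¹ := by
      rw [div_pow, ← div_eq_mul_inv]
      apply div_le_div_of_nonneg_left (by positivity) (by positivity)
      calc ((j:ℤ):ℝ)^2 = |((j:ℤ):ℝ)|^2 := (sq_abs _).symm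
        _ ≤ |2*((j:ℤ):ℝ)+x|^2 := by nlinarith [habs.2.2, abs_nonneg ((j:ℤ):ℝ)]
    have hfW0 : 0 ≤ f (β/|2*((j:ℤ):ℝ)+x|) :=
      hnn _ ⟨by linarith [hW.1], hW.2⟩
    calc (1/β) * ((β/|2*((j:ℤ):ℝ)+x|)^2 * f (β/|2*((j:ℤ):ℝ)+x|))
        ≤ (1/β) * ((β^2 * ((((j:ℤ):ℝ))^2)⁻¹) * f c) := by
          apply mul_le_mul_of_nonneg_left _ (by positivity)
          exact mul_le_mul hsq hfWc hfW0 (by positivity)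
      _ = (β * f c) * ((((j:ℤ):ℝ))^2)⁻¹ := by
          field_simp

end aux

def negE : {j : ℤ // j ≠ 0} ≃ {j : ℤ // j ≠ 0} where
  toFun j := ⟨-j.1, neg_ne_zero.mpr j.2⟩
  invFun j := ⟨-j.1, neg_ne_zero.mpr j.2⟩
  left_inv j := by simp
  right_inv j := by simp


/-- `T_β` preserves the class of nonnegative even convex functions on `(-1,1)`. -/
theorem stmt_14 (β : ℝ) (hβ0 : 0 < β) (hβ1 : β ≤ 1)
    (f : ℝ → ℝ)
    (heven : ∀ x ∈ Set.Ioo (-1 : ℝ) 1, f (-x) = f x)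
    (hconv : ConvexOn ℝ (Set.Ioo (-1 : ℝ) 1) f)
    (hnn : ∀ x ∈ Set.Ioo (-1 : ℝ) 1, 0 ≤ f x) :
    (∀ x ∈ Set.Ioo (-1 : ℝ) 1,
      Summable (fun j : {j : ℤ // j ≠ 0} =>
        (β / (2 * ((j : ℤ) : ℝ) + x) ^ 2) * f (-β / (2 * ((j : ℤ) : ℝ) + x)))) ∧
    (∀ x ∈ Set.Ioo (-1 : ℝ) 1, Tsub β f (-x) = Tsub β f x) ∧
    ConvexOn ℝ (Set.Ioo (-1 : ℝ) 1) (Tsub β f) ∧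
    (∀ x ∈ Set.Ioo (-1 : ℝ) 1, 0 ≤ Tsub β f x) := by
  refine ⟨fun x hx => my_summable hβ0 hβ1 heven hconv hnn x hx, ?_, ?_, ?_⟩
  · -- evenness
    intro x hx
    unfold Tsub
    have hkey : ∀ j : {j : ℤ // j ≠ 0},
        (β / (2 * ((negE j : ℤ) : ℝ) + -x) ^ 2) * f (-β / (2 * ((negE j : ℤ) : ℝ) + -x))
          = (β / (2 * ((j : ℤ) : ℝ) + x) ^ 2) * f (-β / (2 * ((j : ℤ) : ℝ) + x)) := by
      intro j
      have hcast : ((negE j : ℤ) : ℝ) = -((j : ℤ) : ℝ) := by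
        simp [negE]
      rw [hcast]
      have h1 : (2 * -((j:ℤ):ℝ) + -x) = -(2*((j:ℤ):ℝ) + x) := by ring
      rw [h1]
      have h2 : (-(2*((j:ℤ):ℝ)+x))^2 = (2*((j:ℤ):ℝ)+x)^2 := by ring
      rw [h2]
      congr 1
      have h3 : -β / -(2*((j:ℤ):ℝ)+x) = -(-β / (2*((j:ℤ):ℝ)+x)) := by
        rw [div_neg]
      rw [h3]
      exact heven _ (my_v_mem hβ0 hβ1 j.1 j.2 x hx)
    calc ∑' j : {j : ℤ // j ≠ 0}, (β / (2 * ((j : ℤ) : ℝ) + -x) ^ 2) * f (-β / (2 * ((j : ℤ) : ℝ) + -x))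
        = ∑' j : {j : ℤ // j ≠ 0}, (β / (2 * ((negE j : ℤ) : ℝ) + -x) ^ 2) * f (-β / (2 * ((negE j : ℤ) : ℝ) + -x)) :=
          (negE.tsum_eq _).symm
      _ = ∑' j : {j : ℤ // j ≠ 0}, (β / (2 * ((j : ℤ) : ℝ) + x) ^ 2) * f (-β / (2 * ((j : ℤ) : ℝ) + x)) :=
          tsum_congr hkey
  · -- convexity
    refine ⟨convex_Ioo _ _, ?_⟩
    intro x hx y hy a b ha hb hab
    simp only [smul_eq_mul]
    have hz : a*x+b*y ∈ Set.Ioo (-1:ℝ) 1 := by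
      have := (convex_Ioo (-1:ℝ) 1) hx hy ha hb hab
      simpa using this
    have hsx := my_summable hβ0 hβ1 heven hconv hnn x hx
    have hsy := my_summable hβ0 hβ1 heven hconv hnn y hy
    have hsz := my_summable hβ0 hβ1 heven hconv hnn _ hz
    unfold Tsub
    have hterm : ∀ j : {j : ℤ // j ≠ 0},
        (β / (2 * ((j : ℤ) : ℝ) + (a*x+b*y)) ^ 2) * f (-β / (2 * ((j : ℤ) : ℝ) + (a*x+b*y)))
          ≤ a * ((β / (2 * ((j : ℤ) : ℝ) + x) ^ 2) * f (-β / (2 * ((j : ℤ) : ℝ) + x)))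
            + b * ((β / (2 * ((j : ℤ) : ℝ) + y) ^ 2) * f (-β / (2 * ((j : ℤ) : ℝ) + y))) := by
      intro j
      have := (my_term_convexOn hβ0 hβ1 heven hconv hnn j.1 j.2).2 hx hy ha hb hab
      simpa using this
    calc ∑' j : {j : ℤ // j ≠ 0}, (β / (2 * ((j : ℤ) : ℝ) + (a*x+b*y)) ^ 2) * f (-β / (2 * ((j : ℤ) : ℝ) + (a*x+b*y)))
        ≤ ∑' j : {j : ℤ // j ≠ 0},
            (a * ((β / (2 * ((j : ℤ) : ℝ) + x) ^ 2) * f (-β / (2 * ((j : ℤ) : ℝ) + x)))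
              + b * ((β / (2 * ((j : ℤ) : ℝ) + y) ^ 2) * f (-β / (2 * ((j : ℤ) : ℝ) + y)))) :=
          Summable.tsum_le_tsum hterm hsz ((hsx.mul_left a).add (hsy.mul_left b))
      _ = a * (∑' j : {j : ℤ // j ≠ 0}, (β / (2 * ((j : ℤ) : ℝ) + x) ^ 2) * f (-β / (2 * ((j : ℤ) : ℝ) + x)))
            + b * (∑' j : {j : ℤ // j ≠ 0}, (β / (2 * ((j : ℤ) : ℝ) + y) ^ 2) * f (-β / (2 * ((j : ℤ) : ℝ) + y))) := by
          rw [Summable.tsum_add (hsx.mul_left a) (hsy.mul_left b), tsum_mul_left, tsum_mul_left]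
  · -- nonnegativity
    intro x hx
    apply tsum_nonneg
    intro j
    exact mul_nonneg (by positivity) (hnn _ (my_v_mem hβ0 hβ1 j.1 j.2 x hx))
end

section
/- Fix 0 < γ ≤ 1 and let λ₁(x) = 1/(1+x) for x ∈ (0,1). Then for every integer n ≥ 1 and every x ∈ (0,1): (S_γ)ⁿ λ₁(x) ≤ (2γ/(1+γ))ⁿ · λ₁(x), where (S_γ)ⁿ denotes the n-fold iterate of S_γ (all the arising series of nonnegative terms converge). -/
open Real

/-- The subtransfer operator `S_γ` of the Gauss-type map `x ↦ {γ/x} mod 1`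
(summation over `j ≥ 1`, written as `j + 1` with `j : ℕ`). -/
noncomputable def Ssub (γ : ℝ) (f : ℝ → ℝ) (x : ℝ) : ℝ :=
  ∑' j : ℕ, (γ / (((j : ℝ) + 1) + x) ^ 2) * f (γ / (((j : ℝ) + 1) + x))

/-! With `D = j + 1 + x`, the `j`-th term of `S_γ λ₁ (x)` is `γ / (D (D + γ))`, and
`(1 + γ)(D + 1) ≤ 2 (D + γ)` (i.e. `(1 - γ)(D - 1) ≥ 0`) bounds it by
`2γ/(1+γ) · (1/D - 1/(D+1))`. These majorants telescope to `2γ/(1+γ) · λ₁ (x)`. Since `S_γ` is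
monotone and homogeneous on nonnegative functions, the bound `0 ≤ g ≤ C λ₁` passes to
`0 ≤ S_γ g ≤ 2γ/(1+γ) · C λ₁`, and induction on `n` gives the claim. -/

open Filter Set Topology

theorem hasSum_sub_succ_of_antitone {f : ℕ → ℝ} (hf : Antitone f)
    (hlim : Tendsto f atTop (𝓝 0)) : HasSum (fun n ↦ f n - f (n + 1)) (f 0) := by
  rw [hasSum_iff_tendsto_nat_of_nonneg (fun n ↦ sub_nonneg.2 (hf n.le_succ))]
  simp_rw [Finset.sum_range_sub']
  simpa using tendsto_const_nhds.sub hlim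

theorem hasSum_one_div_sub_one_div {x : ℝ} (hx : -1 < x) :
    HasSum (fun j : ℕ ↦ 1 / ((j + 1 : ℝ) + x) - 1 / ((j + 1 : ℝ) + x + 1)) (1 / (1 + x)) := by
  have hpos (j : ℕ) : 0 < (j + 1 : ℝ) + x := by have := j.cast_nonneg (α := ℝ); linarith
  have hf : Antitone fun j : ℕ ↦ 1 / ((j + 1 : ℝ) + x) := fun i j hij ↦
    one_div_le_one_div_of_le (hpos i) (by gcongr)
  have hlim : Tendsto (fun j : ℕ ↦ 1 / ((j + 1 : ℝ) + x)) atTop (𝓝 0) := by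
    simp_rw [one_div]
    refine tendsto_inv_atTop_zero.comp (tendsto_atTop_add_const_right _ _ ?_)
    exact tendsto_atTop_add_const_right _ _ tendsto_natCast_atTop_atTop
  convert hasSum_sub_succ_of_antitone hf hlim using 1
  · ext j; push_cast; ring
  · simp [add_comm]

theorem div_natCast_add_one_add_mem_Ioo {γ x : ℝ} (hγ0 : 0 < γ) (hγ1 : γ ≤ 1) (hx : 0 < x)
    (j : ℕ) : γ / ((j + 1 : ℝ) + x) ∈ Ioo 0 1 := by
  have hD : 1 < (j + 1 : ℝ) + x := by have := j.cast_nonneg (α := ℝ); linarith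
  exact ⟨by positivity, (div_lt_one (by linarith)).2 (by linarith)⟩

theorem div_sq_mul_one_div_one_add_le {γ D : ℝ} (hγ0 : 0 < γ) (hγ1 : γ ≤ 1) (hD : 1 ≤ D) :
    γ / D ^ 2 * (1 / (1 + γ / D)) ≤ 2 * γ / (1 + γ) * (1 / D - 1 / (D + 1)) := by
  have hD0 : 0 < D := by linarith
  rw [show γ / D ^ 2 * (1 / (1 + γ / D)) = γ / (D * (D + γ)) by field_simp,
    show 2 * γ / (1 + γ) * (1 / D - 1 / (D + 1)) = 2 * γ / ((1 + γ) * (D * (D + 1))) by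
      field_simp; ring,
    div_le_div_iff₀ (by positivity) (by positivity)]
  nlinarith [mul_nonneg (mul_nonneg hγ0.le hD0.le) (mul_nonneg (sub_nonneg.2 hγ1) (sub_nonneg.2 hD))]

theorem Ssub_le_of_le {γ C : ℝ} (hγ0 : 0 < γ) (hγ1 : γ ≤ 1) (hC : 0 ≤ C) {g : ℝ → ℝ}
    (hg : ∀ y ∈ Ioo (0 : ℝ) 1, 0 ≤ g y ∧ g y ≤ C * (1 / (1 + y))) {x : ℝ}
    (hx : x ∈ Ioo (0 : ℝ) 1) :
    (Summable fun j : ℕ ↦ γ / ((j + 1 : ℝ) + x) ^ 2 * g (γ / ((j + 1 : ℝ) + x))) ∧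
      0 ≤ Ssub γ g x ∧ Ssub γ g x ≤ 2 * γ / (1 + γ) * C * (1 / (1 + x)) := by
  have hD (j : ℕ) : 1 ≤ (j + 1 : ℝ) + x := by have := j.cast_nonneg (α := ℝ); linarith [hx.1]
  have hy := div_natCast_add_one_add_mem_Ioo hγ0 hγ1 hx.1
  have hnonneg (j : ℕ) : 0 ≤ γ / ((j + 1 : ℝ) + x) ^ 2 * g (γ / ((j + 1 : ℝ) + x)) :=
    mul_nonneg (by positivity) (hg _ (hy j)).1
  have hle (j : ℕ) : γ / ((j + 1 : ℝ) + x) ^ 2 * g (γ / ((j + 1 : ℝ) + x)) ≤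
      C * (2 * γ / (1 + γ) * (1 / ((j + 1 : ℝ) + x) - 1 / ((j + 1 : ℝ) + x + 1))) :=
    calc _ ≤ γ / ((j + 1 : ℝ) + x) ^ 2 * (C * (1 / (1 + γ / ((j + 1 : ℝ) + x)))) := by
          gcongr; exact (hg _ (hy j)).2
      _ = C * (γ / ((j + 1 : ℝ) + x) ^ 2 * (1 / (1 + γ / ((j + 1 : ℝ) + x)))) := by ring
      _ ≤ _ := mul_le_mul_of_nonneg_left (div_sq_mul_one_div_one_add_le hγ0 hγ1 (hD j)) hC
  have hmaj := ((hasSum_one_div_sub_one_div (x := x) (by linarith [hx.1])).mul_left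
    (2 * γ / (1 + γ))).mul_left C
  have hsum := hmaj.summable.of_nonneg_of_le hnonneg hle
  refine ⟨hsum, tsum_nonneg hnonneg, ?_⟩
  calc Ssub γ g x ≤ C * (2 * γ / (1 + γ) * (1 / (1 + x))) := hasSum_le hle hsum.hasSum hmaj
    _ = _ := by ring

theorem iterate_Ssub_one_div_one_add_le {γ : ℝ} (hγ0 : 0 < γ) (hγ1 : γ ≤ 1) (n : ℕ) :
    ∀ y ∈ Ioo (0 : ℝ) 1, 0 ≤ (Ssub γ)^[n] (fun y ↦ 1 / (1 + y)) y ∧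
      (Ssub γ)^[n] (fun y ↦ 1 / (1 + y)) y ≤ (2 * γ / (1 + γ)) ^ n * (1 / (1 + y)) := by
  induction n with
  | zero =>
    intro y hy
    have := hy.1
    simp only [Function.iterate_zero, id, pow_zero, one_mul]
    exact ⟨by positivity, le_rfl⟩
  | succ n ih =>
    intro y hy
    rw [Function.iterate_succ_apply', pow_succ']
    exact (Ssub_le_of_le hγ0 hγ1 (by positivity) ih hy).2

/-- Geometric decay of the `S_γ`-iterates of `λ₁(x) = 1/(1+x)`. -/
theorem stmt_15 (γ : ℝ) (hγ0 : 0 < γ) (hγ1 : γ ≤ 1) :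
    ∀ n : ℕ, 1 ≤ n →
      (∀ k : ℕ, k < n → ∀ x ∈ Set.Ioo (0 : ℝ) 1,
        Summable fun j : ℕ =>
          (γ / (((j : ℝ) + 1) + x) ^ 2) *
            ((Ssub γ)^[k] (fun y => 1 / (1 + y))) (γ / (((j : ℝ) + 1) + x))) ∧
      ∀ x ∈ Set.Ioo (0 : ℝ) 1,
        (Ssub γ)^[n] (fun y => 1 / (1 + y)) x ≤
          (2 * γ / (1 + γ)) ^ n * (1 / (1 + x)) := by
  intro n _
  refine ⟨fun k _ x hx ↦ ?_, fun x hx ↦ (iterate_Ssub_one_div_one_add_le hγ0 hγ1 n x hx).2⟩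
  exact (Ssub_le_of_le hγ0 hγ1 (by positivity) (iterate_Ssub_one_div_one_add_le hγ0 hγ1 k) hx).1
end

section
/- Fix 0 < β < 1 and let κ₁(x) = 1/(1 − x²) for x ∈ (−1,1). Then for every integer n ≥ 1 and every x ∈ (−1,1): (T_β)ⁿ κ₁(x) ≤ 2βⁿ/(1 − β), where (T_β)ⁿ denotes the n-fold iterate of T_β (all the arising series of nonnegative terms converge). -/
/-!
Write `κ₁ y = 1 / (1 - y²)` and `d = 2j + x`. The `j`-th term of `T_β κ₁ (x)` is
`β / d² · 1 / (1 - β²/d²) = β / (d² - β²)`, and since `d² - β² ≥ (d - 1)(d + 1)` the series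
`Φ_β(x) = ∑_{j ≠ 0} 1 / (d² - β²)` is dominated by a telescoping one. Over `j ≥ 1` it is at most
`1 / (2(1 + x))`, over `j ≤ -1` at most `1 / (2(1 - x))`, so `Φ_β ≤ κ₁` and, by induction,
`T_βⁿ κ₁ ≤ βⁿ κ₁`. To remove the blow-up of `κ₁` at `±1` in the last step, treat `j = ±1` apart:
one of these terms is at most `1 / (1 - β²)`, the other at most `1/3`, and the telescoping tails
from `|j| ≥ 2` add up to at most `1/2`. Hence `Φ_β ≤ 2 / (1 - β)` uniformly and
`T_βⁿ κ₁ = T_β (T_βⁿ⁻¹ κ₁) ≤ βⁿ⁻¹ · β Φ_β ≤ 2βⁿ / (1 - β)`.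
-/

open Real

open Finset

theorem sum_le_of_forall_sum_range_le {g : ℤ → ℝ} {c : ℝ} (hg : ∀ j ≠ 0, 0 ≤ g j)
    (h : ∀ N : ℕ, ∑ k ∈ range N, (g (k + 1) + g (-(k + 1))) ≤ c)
    (S : Finset {j : ℤ // j ≠ 0}) : ∑ j ∈ S, g j ≤ c := by
  classical
  let e : ℕ × Bool → ℤ := fun p => bif p.2 then p.1 + 1 else -(p.1 + 1)
  obtain ⟨N, hN⟩ := (S.image fun j : {j : ℤ // j ≠ 0} => (j : ℤ).natAbs).exists_nat_subset_range
  have hsub : S.map (Function.Embedding.subtype _) ⊆ (range N ×ˢ univ).image e := by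
    intro j hj
    obtain ⟨j, hjS, rfl⟩ := mem_map.mp hj
    have hlt := mem_range.mp (hN (mem_image_of_mem _ hjS))
    refine mem_image.mpr ⟨((j : ℤ).natAbs - 1, decide (0 < (j : ℤ))), ?_, ?_⟩
    · simp only [mem_product, mem_range, mem_univ, and_true]
      omega
    · have := j.2
      by_cases hj0 : 0 < (j : ℤ) <;>
        simp only [e, hj0, decide_true, decide_false, cond_true, cond_false,
          Function.Embedding.subtype_apply] <;> omega
  have hg_image : ∀ j ∈ (range N ×ˢ univ).image e, 0 ≤ g j := by
    intro j hj
    obtain ⟨⟨k, b⟩, -, rfl⟩ := mem_image.mp hj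
    apply hg
    cases b <;> simp only [e, cond_true, cond_false] <;> omega
  calc ∑ j ∈ S, g j = ∑ j ∈ S.map (Function.Embedding.subtype _), g j := by rw [sum_map]; rfl
    _ ≤ ∑ j ∈ (range N ×ˢ univ).image e, g j :=
        sum_le_sum_of_subset_of_nonneg hsub fun j hj _ => hg_image j hj
    _ ≤ ∑ p ∈ range N ×ˢ univ, g (e p) := sum_image_le_of_nonneg hg_image
    _ = ∑ k ∈ range N, (g (k + 1) + g (-(k + 1))) := by simp [sum_product, e]
    _ ≤ c := h N

theorem summable_and_tsum_le_of_sum_range_le {g : ℤ → ℝ} {c : ℝ} (hg : ∀ j ≠ 0, 0 ≤ g j)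
    (h : ∀ N : ℕ, ∑ k ∈ range N, (g (k + 1) + g (-(k + 1))) ≤ c) :
    Summable (fun j : {j : ℤ // j ≠ 0} => g j) ∧ ∑' j : {j : ℤ // j ≠ 0}, g j ≤ c :=
  ⟨summable_of_sum_le (fun j => hg j j.2) (sum_le_of_forall_sum_range_le hg h),
    Real.tsum_le_of_sum_le (fun j => hg j j.2) (sum_le_of_forall_sum_range_le hg h)⟩

/-- `(2k + 1 + y)² - β² ≥ (2k + y)(2k + y + 2)`, which telescopes against `1 / (2(2k + y))`. -/
theorem sum_range_one_div_sq_sub_sq_le {β y : ℝ} (hβ0 : 0 ≤ β) (hβ1 : β ≤ 1) (hy : 0 < y)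
    (N : ℕ) : ∑ k ∈ range N, 1 / ((2 * k + 1 + y) ^ 2 - β ^ 2) ≤ 1 / (2 * y) := by
  set f : ℕ → ℝ := fun k => 1 / (2 * (2 * k + y))
  have hterm : ∀ k : ℕ, 1 / ((2 * k + 1 + y) ^ 2 - β ^ 2) ≤ f k - f (k + 1) := by
    intro k
    have hk : (0 : ℝ) < 2 * k + y := by positivity
    calc 1 / ((2 * k + 1 + y) ^ 2 - β ^ 2) ≤ 1 / ((2 * k + y) * (2 * k + y + 2)) :=
          one_div_le_one_div_of_le (by positivity) (by nlinarith)
      _ = f k - f (k + 1) := by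
          simp only [f]
          push_cast
          field_simp
          ring
  have hfN : 0 ≤ f N := by positivity
  calc ∑ k ∈ range N, 1 / ((2 * k + 1 + y) ^ 2 - β ^ 2)
      ≤ ∑ k ∈ range N, (f k - f (k + 1)) := sum_le_sum fun k _ => hterm k
    _ = f 0 - f N := sum_range_sub' f N
    _ ≤ 1 / (2 * y) := by simp only [f, CharP.cast_eq_zero, mul_zero, zero_add]; linarith

/-- `β * tsubKappaTerm β x j` is the `j`-th term of `T_β κ₁ (x)`. -/
noncomputable def tsubKappaTerm (β x : ℝ) (j : ℤ) : ℝ := 1 / ((2 * j + x) ^ 2 - β ^ 2)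

variable {β x : ℝ}

theorem one_lt_sq_two_mul_add {j : ℤ} (hj : j ≠ 0) (hx : x ∈ Set.Ioo (-1 : ℝ) 1) :
    1 < (2 * (j : ℝ) + x) ^ 2 := by
  obtain ⟨hx1, hx2⟩ := hx
  rcases hj.lt_or_gt with hj | hj
  · have : (j : ℝ) ≤ -1 := by exact_mod_cast Int.le_sub_one_of_lt hj
    nlinarith
  · have : (1 : ℝ) ≤ j := by exact_mod_cast hj
    nlinarith

theorem tsubKappaTerm_pos (hβ0 : 0 ≤ β) (hβ1 : β ≤ 1) {j : ℤ} (hj : j ≠ 0)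
    (hx : x ∈ Set.Ioo (-1 : ℝ) 1) : 0 < tsubKappaTerm β x j := by
  have := one_lt_sq_two_mul_add hj hx
  unfold tsubKappaTerm
  exact one_div_pos.mpr (by nlinarith)

theorem sum_range_tsubKappaTerm_le_kappa (hβ0 : 0 ≤ β) (hβ1 : β ≤ 1) (hx : x ∈ Set.Ioo (-1 : ℝ) 1)
    (N : ℕ) :
    ∑ k ∈ range N, (tsubKappaTerm β x (k + 1) + tsubKappaTerm β x (-(k + 1))) ≤
      1 / (1 - x ^ 2) := by
  obtain ⟨hx1, hx2⟩ := hx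
  have hpos : ∀ k : ℕ, tsubKappaTerm β x (k + 1) = 1 / ((2 * k + 1 + (1 + x)) ^ 2 - β ^ 2) := by
    intro k; unfold tsubKappaTerm; push_cast; ring
  have hneg : ∀ k : ℕ,
      tsubKappaTerm β x (-(k + 1)) = 1 / ((2 * k + 1 + (1 - x)) ^ 2 - β ^ 2) := by
    intro k; unfold tsubKappaTerm; push_cast; ring
  simp only [sum_add_distrib, hpos, hneg]
  calc _ ≤ 1 / (2 * (1 + x)) + 1 / (2 * (1 - x)) :=
        add_le_add (sum_range_one_div_sq_sub_sq_le hβ0 hβ1 (by linarith) N)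
          (sum_range_one_div_sq_sub_sq_le hβ0 hβ1 (by linarith) N)
    _ = 1 / (1 - x ^ 2) := by
        have : 1 - x ^ 2 ≠ 0 := by nlinarith
        field_simp [show 1 + x ≠ 0 by linarith, show 1 - x ≠ 0 by linarith]
        ring

/-- Of the two terms with `|j| = 1` only the one with `|2j + x| < 2` can be large. -/
theorem tsubKappaTerm_one_add_neg_one_le (hβ0 : 0 ≤ β) (hβ1 : β < 1) (hx : x ∈ Set.Ioo (-1 : ℝ) 1) :
    tsubKappaTerm β x 1 + tsubKappaTerm β x (-1) ≤ 1 / (1 - β ^ 2) + 1 / 3 := by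
  obtain ⟨hx1, hx2⟩ := hx
  have hβ : 0 < 1 - β ^ 2 := by nlinarith
  unfold tsubKappaTerm
  push_cast
  rcases le_total 0 x with hx0 | hx0
  · rw [add_comm]
    exact add_le_add (one_div_le_one_div_of_le hβ (by nlinarith))
      (one_div_le_one_div_of_le (by norm_num) (by nlinarith))
  · exact add_le_add (one_div_le_one_div_of_le hβ (by nlinarith))
      (one_div_le_one_div_of_le (by norm_num) (by nlinarith))

theorem sum_range_tsubKappaTerm_le_two_div (hβ0 : 0 ≤ β) (hβ1 : β < 1)
    (hx : x ∈ Set.Ioo (-1 : ℝ) 1) (N : ℕ) :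
    ∑ k ∈ range N, (tsubKappaTerm β x (k + 1) + tsubKappaTerm β x (-(k + 1))) ≤
      2 / (1 - β) := by
  have hβ : 0 < 1 - β := by linarith
  cases N with
  | zero => simp only [range_zero, sum_empty]; positivity
  | succ N =>
    have hone := tsubKappaTerm_one_add_neg_one_le hβ0 hβ1 hx
    obtain ⟨hx1, hx2⟩ := hx
    have hpos : ∀ k : ℕ,
        tsubKappaTerm β x ((k + 1 : ℕ) + 1) = 1 / ((2 * k + 1 + (3 + x)) ^ 2 - β ^ 2) := by
      intro k; unfold tsubKappaTerm; push_cast; ring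
    have hneg : ∀ k : ℕ,
        tsubKappaTerm β x (-((k + 1 : ℕ) + 1)) = 1 / ((2 * k + 1 + (3 - x)) ^ 2 - β ^ 2) := by
      intro k; unfold tsubKappaTerm; push_cast; ring
    have htailPos := sum_range_one_div_sq_sub_sq_le hβ0 hβ1.le (show 0 < 3 + x by linarith) N
    have htailNeg := sum_range_one_div_sq_sub_sq_le hβ0 hβ1.le (show 0 < 3 - x by linarith) N
    have hPos : 1 / (2 * (3 + x)) ≤ 1 / 4 := one_div_le_one_div_of_le (by norm_num) (by linarith)
    have hNeg : 1 / (2 * (3 - x)) ≤ 1 / 4 := one_div_le_one_div_of_le (by norm_num) (by linarith)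
    have hβ2 : 1 / (1 - β ^ 2) + 5 / 6 ≤ 2 / (1 - β) := by
      rw [show 1 - β ^ 2 = (1 - β) * (1 + β) by ring, div_add' _ _ _ (by positivity),
        div_le_div_iff₀ (by positivity) hβ]
      nlinarith
    rw [sum_range_succ', sum_add_distrib]
    simp only [hpos, hneg, CharP.cast_eq_zero, zero_add]
    linarith

theorem summable_tsubKappaTerm (hβ0 : 0 ≤ β) (hβ1 : β ≤ 1) (hx : x ∈ Set.Ioo (-1 : ℝ) 1) :
    Summable (fun j : {j : ℤ // j ≠ 0} => tsubKappaTerm β x j) :=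
  (summable_and_tsum_le_of_sum_range_le (fun _ hj => (tsubKappaTerm_pos hβ0 hβ1 hj hx).le)
    (sum_range_tsubKappaTerm_le_kappa hβ0 hβ1 hx)).1

theorem tsum_tsubKappaTerm_le_kappa (hβ0 : 0 ≤ β) (hβ1 : β ≤ 1) (hx : x ∈ Set.Ioo (-1 : ℝ) 1) :
    ∑' j : {j : ℤ // j ≠ 0}, tsubKappaTerm β x j ≤ 1 / (1 - x ^ 2) :=
  (summable_and_tsum_le_of_sum_range_le (fun _ hj => (tsubKappaTerm_pos hβ0 hβ1 hj hx).le)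
    (sum_range_tsubKappaTerm_le_kappa hβ0 hβ1 hx)).2

theorem tsum_tsubKappaTerm_le_two_div (hβ0 : 0 ≤ β) (hβ1 : β < 1) (hx : x ∈ Set.Ioo (-1 : ℝ) 1) :
    ∑' j : {j : ℤ // j ≠ 0}, tsubKappaTerm β x j ≤ 2 / (1 - β) :=
  (summable_and_tsum_le_of_sum_range_le (fun _ hj => (tsubKappaTerm_pos hβ0 hβ1.le hj hx).le)
    (sum_range_tsubKappaTerm_le_two_div hβ0 hβ1 hx)).2

theorem neg_div_two_mul_add_mem_Ioo (hβ0 : 0 ≤ β) (hβ1 : β ≤ 1) {j : ℤ} (hj : j ≠ 0)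
    (hx : x ∈ Set.Ioo (-1 : ℝ) 1) : -β / (2 * (j : ℝ) + x) ∈ Set.Ioo (-1 : ℝ) 1 := by
  have hd := (one_lt_sq_iff_one_lt_abs _).mp (one_lt_sq_two_mul_add hj hx)
  rw [Set.mem_Ioo, ← abs_lt, abs_div, abs_neg, abs_of_nonneg hβ0, div_lt_one (by linarith)]
  linarith

theorem Tsub_term_nonneg_and_le {F : ℝ → ℝ} {M : ℝ} (hβ0 : 0 ≤ β) (hβ1 : β ≤ 1)
    (hF : ∀ y ∈ Set.Ioo (-1 : ℝ) 1, 0 ≤ F y ∧ F y ≤ M * (1 / (1 - y ^ 2)))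
    {j : ℤ} (hj : j ≠ 0) (hx : x ∈ Set.Ioo (-1 : ℝ) 1) :
    0 ≤ β / (2 * (j : ℝ) + x) ^ 2 * F (-β / (2 * (j : ℝ) + x)) ∧
      β / (2 * (j : ℝ) + x) ^ 2 * F (-β / (2 * (j : ℝ) + x)) ≤ M * β * tsubKappaTerm β x j := by
  have hd := one_lt_sq_two_mul_add hj hx
  have hc : 0 ≤ β / (2 * (j : ℝ) + x) ^ 2 := by positivity
  obtain ⟨hF0, hFM⟩ := hF _ (neg_div_two_mul_add_mem_Ioo hβ0 hβ1 hj hx)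
  refine ⟨mul_nonneg hc hF0, (mul_le_mul_of_nonneg_left hFM hc).trans_eq ?_⟩
  have : 2 * (j : ℝ) + x ≠ 0 := by rintro h; norm_num [h] at hd
  have : (2 * (j : ℝ) + x) ^ 2 - β ^ 2 ≠ 0 := by nlinarith
  unfold tsubKappaTerm
  field_simp

theorem Tsub_bounds_of_le_kappa {F : ℝ → ℝ} {M : ℝ} (hβ0 : 0 ≤ β) (hβ1 : β ≤ 1)
    (hF : ∀ y ∈ Set.Ioo (-1 : ℝ) 1, 0 ≤ F y ∧ F y ≤ M * (1 / (1 - y ^ 2)))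
    (hx : x ∈ Set.Ioo (-1 : ℝ) 1) :
    (Summable fun j : {j : ℤ // j ≠ 0} =>
        β / (2 * ((j : ℤ) : ℝ) + x) ^ 2 * F (-β / (2 * ((j : ℤ) : ℝ) + x))) ∧
      0 ≤ Tsub β F x ∧ Tsub β F x ≤ M * β * ∑' j : {j : ℤ // j ≠ 0}, tsubKappaTerm β x j := by
  have hterm := fun j : {j : ℤ // j ≠ 0} => Tsub_term_nonneg_and_le hβ0 hβ1 hF j.2 hx
  have hmaj := (summable_tsubKappaTerm hβ0 hβ1 hx).mul_left (M * β)
  have hsum := Summable.of_nonneg_of_le (fun j => (hterm j).1) (fun j => (hterm j).2) hmaj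
  refine ⟨hsum, tsum_nonneg fun j => (hterm j).1, ?_⟩
  rw [← tsum_mul_left]
  exact hsum.tsum_le_tsum (fun j => (hterm j).2) hmaj

theorem iterate_Tsub_kappa_nonneg_and_le (hβ0 : 0 ≤ β) (hβ1 : β ≤ 1) (n : ℕ) :
    ∀ y ∈ Set.Ioo (-1 : ℝ) 1, 0 ≤ (Tsub β)^[n] (fun y => 1 / (1 - y ^ 2)) y ∧
      (Tsub β)^[n] (fun y => 1 / (1 - y ^ 2)) y ≤ β ^ n * (1 / (1 - y ^ 2)) := by
  induction n with
  | zero =>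
    intro y ⟨hy1, hy2⟩
    have : 0 < 1 - y ^ 2 := by nlinarith
    simp only [Function.iterate_zero, id_eq, pow_zero, one_mul]
    exact ⟨by positivity, le_rfl⟩
  | succ n ih =>
    intro y hy
    obtain ⟨-, h0, hle⟩ := Tsub_bounds_of_le_kappa hβ0 hβ1 ih hy
    rw [Function.iterate_succ_apply']
    refine ⟨h0, hle.trans ?_⟩
    rw [pow_succ]
    exact mul_le_mul_of_nonneg_left (tsum_tsubKappaTerm_le_kappa hβ0 hβ1 hy) (by positivity)

/-- Uniform geometric bound for the `T_β`-iterates of `κ₁(x) = 1/(1-x²)`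
when `0 < β < 1`. -/
theorem stmt_17 (β : ℝ) (hβ0 : 0 < β) (hβ1 : β < 1) :
    ∀ n : ℕ, 1 ≤ n →
      (∀ k : ℕ, k < n → ∀ x ∈ Set.Ioo (-1 : ℝ) 1,
        Summable fun j : {j : ℤ // j ≠ 0} =>
          (β / (2 * ((j : ℤ) : ℝ) + x) ^ 2) *
            ((Tsub β)^[k] (fun y => 1 / (1 - y ^ 2))) (-β / (2 * ((j : ℤ) : ℝ) + x))) ∧
      ∀ x ∈ Set.Ioo (-1 : ℝ) 1,
        (Tsub β)^[n] (fun y => 1 / (1 - y ^ 2)) x ≤ 2 * β ^ n / (1 - β) := by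
  intro n hn
  have hT := fun k x (hx : x ∈ Set.Ioo (-1 : ℝ) 1) =>
    Tsub_bounds_of_le_kappa hβ0.le hβ1.le (iterate_Tsub_kappa_nonneg_and_le hβ0.le hβ1.le k) hx
  refine ⟨fun k _ x hx => (hT k x hx).1, fun x hx => ?_⟩
  obtain ⟨m, rfl⟩ := Nat.exists_eq_add_of_le' hn
  rw [Function.iterate_succ_apply']
  calc Tsub β ((Tsub β)^[m] (fun y => 1 / (1 - y ^ 2))) x
      ≤ β ^ m * β * ∑' j : {j : ℤ // j ≠ 0}, tsubKappaTerm β x j :=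
        (hT m x hx).2.2
    _ ≤ β ^ m * β * (2 / (1 - β)) :=
        mul_le_mul_of_nonneg_left (tsum_tsubKappaTerm_le_two_div hβ0.le hβ1 hx) (by positivity)
    _ = 2 * β ^ (m + 1) / (1 - β) := by ring
end
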